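/- arXiv:2209.04903 — 8 statements merged into one kernel-verified Lean document; each statement's English description precedes it below -/
import Mathlib

section
/- Let G = (V,E) be a finite perfect graph with vertex weights w : V → ℝ, w(v) ≥ 0 for all v. A function y assigning a nonnegative real y_Q to each nonempty clique Q of G is in the core of the stable set game on (G,w) if and only if y is an optimal solution of the dual LP, i.e., y is dual-feasible (for every vertex v, Σ_{Q : v ∈ Q} y_Q ≥ w(v)) and Σ_Q y_Q is minimum among all dual-feasible nonnegative functions on the nonempty cliques of G. -/
open scoped Classical

/-- A set of vertices is stable (independent) if no two of its vertices are adjacent. -/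
def IsStableSet {V : Type*} (G : SimpleGraph V) (S : Set V) : Prop :=
  S.Pairwise fun u v => ¬ G.Adj u v

/-- A graph is perfect if every induced subgraph has chromatic number equal to clique number. -/
def IsPerfect {V : Type*} (G : SimpleGraph V) : Prop :=
  ∀ T : Set V, (G.induce T).chromaticNumber = ((G.induce T).cliqueNum : ℕ∞)

/-- `worth(G[T])`: the maximum total weight of a stable set contained in `T`. -/
noncomputable def stableWorth {V : Type*} [Fintype V] (G : SimpleGraph V) (w : V → ℝ)
    (T : Set V) : ℝ :=
  sSup {x : ℝ | ∃ S : Finset V, ↑S ⊆ T ∧ IsStableSet G ↑S ∧ x = ∑ v ∈ S, w v}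

/-- The nonempty cliques of `G`, as a finset of finsets. -/
noncomputable def cliquesOf {V : Type*} [Fintype V] (G : SimpleGraph V) : Finset (Finset V) :=
  Finset.univ.filter fun Q => Q.Nonempty ∧ G.IsClique (↑Q : Set V)

/-!
Weak duality: a stable set meets every clique at most once, so for any dual-feasible `y` and any
`T` we get `worth(G[T]) ≤ ∑_{Q ∩ T ≠ ∅} y_Q`, and in particular `worth(G) ≤ ∑_Q y_Q`. Hence a
core element is dual-feasible (take `T = {v}`) and optimal, and conversely an optimal `y` lies in
the core as soon as the dual optimum equals `worth(G)`.

Strong duality for perfect graphs follows Lovász. Replacing vertices by cliques of true twins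
preserves perfection, so for multiplicities `h : V → ℕ` the vertices can be covered,
`v` at least `h v` times, by `max_Q ∑_{v ∈ Q} h v` stable sets. Taking `h v` to be the number of
maximum-weight stable sets through `v`, double counting produces a clique `Q` of positive-weight
vertices meeting every maximum-weight stable set. Lowering the weights on `Q` by the largest
admissible `t` lowers `worth(G)` by exactly `t`, and either some weight drops to `0` or a new
stable set becomes maximum; this descent terminates and its steps add up to a dual solution of
value `worth(G)`.
-/

open Finset SimpleGraph

namespace SimpleGraph

variable {V W : Type*} {G : SimpleGraph V} {H : SimpleGraph W}

theorem IsNClique.map_embedding {n : ℕ} {s : Finset W} (hs : H.IsNClique n s) (f : H ↪g G) :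
    G.IsNClique n (s.map f.toEmbedding) :=
  (hs.map (f := f.toEmbedding)).mono <|
    (map_le_iff_le_comap _ _ _).mpr fun _ _ h => f.map_adj_iff.mpr h

theorem cliqueNum_le_of_embedding [Finite V] (f : H ↪g G) : H.cliqueNum ≤ G.cliqueNum := by
  obtain ⟨s, hs⟩ := H.exists_isNClique_cliqueNum
  have hmap := hs.map_embedding f
  exact hmap.card_eq ▸ hmap.isClique.card_le_cliqueNum

theorem Colorable.succ_of_isIndepSet {s : Set V} {n : ℕ} (hs : G.IsIndepSet s)
    (h : (G.induce sᶜ).Colorable n) : G.Colorable (n + 1) := by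
  obtain ⟨C⟩ := h
  refine ⟨Coloring.mk (fun v => if hv : v ∈ s then Fin.last n else (C ⟨v, hv⟩).castSucc) ?_⟩
  intro u v huv
  by_cases hu : u ∈ s <;> by_cases hv : v ∈ s <;> simp only [hu, hv, dite_true, dite_false]
  · exact absurd huv (hs hu hv huv.ne)
  · exact (Fin.castSucc_lt_last _).ne'
  · exact (Fin.castSucc_lt_last _).ne
  · exact fun h => C.valid (show (G.induce sᶜ).Adj ⟨u, hu⟩ ⟨v, hv⟩ from huv)
      (Fin.castSucc_injective _ h)

theorem colorable_cliqueNum_of_twins [Finite W] {a b : W} (hab : H.Adj a b)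
    (htwin : ∀ u, u ≠ a → u ≠ b → (H.Adj a u ↔ H.Adj b u))
    (hperf : ∀ T : Set W, b ∉ T → (H.induce T).Colorable (H.induce T).cliqueNum) :
    H.Colorable H.cliqueNum := by
  set H₀ := H.induce {b}ᶜ
  have ha : a ∈ ({b}ᶜ : Set W) := hab.ne
  obtain ⟨C⟩ := hperf {b}ᶜ (by simp)
  by_cases hmax : ∃ K, H₀.IsNClique H₀.cliqueNum K ∧ ⟨a, ha⟩ ∈ K
  · -- `b` enlarges a maximum clique of `H₀` and gets a colour of its own
    obtain ⟨K, hK, haK⟩ := hmax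
    have hKb : H.IsNClique (H₀.cliqueNum + 1) (insert b (K.map (.subtype _))) := by
      refine ((isNClique_induce_iff _ _ _).mp hK).insert fun u hu => ?_
      obtain ⟨u, huK, rfl⟩ := Finset.mem_map.mp hu
      by_cases hua : (u : W) = a
      · simpa [hua] using hab.symm
      · exact (htwin u hua u.2).mp
          (hK.isClique haK huK fun h => hua (congrArg Subtype.val h).symm)
    exact ((hperf {b}ᶜ (by simp)).succ_of_isIndepSet (by simp)).mono
      (hKb.card_eq ▸ hKb.isClique.card_le_cliqueNum)
  · -- the colour class of `a`, with `a` traded for `b`, is stable and meets every maximum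
    -- clique of `H₀`, so removing it lowers the clique number
    push Not at hmax
    set s : Set W := {x | x = b ∨ ∃ hx : x ≠ b, x ≠ a ∧ C ⟨x, hx⟩ = C ⟨a, ha⟩}
    have hs : H.IsIndepSet s := by
      rintro x (rfl | ⟨hx, hxa, hCx⟩) y (rfl | ⟨hy, hya, hCy⟩) hxy hadj
      · exact hxy rfl
      · exact C.valid (show H₀.Adj ⟨a, ha⟩ ⟨y, hy⟩ from (htwin y hya hy).mpr hadj) hCy.symm
      · exact C.valid (show H₀.Adj ⟨a, ha⟩ ⟨x, hx⟩ from (htwin x hxa hx).mpr hadj.symm) hCx.symm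
      · exact C.valid (show H₀.Adj ⟨x, hx⟩ ⟨y, hy⟩ from hadj) (hCx.trans hCy.symm)
    have hsub : sᶜ ⊆ {b}ᶜ := fun x hx hxb => hx (Or.inl hxb)
    have hlt : (H.induce sᶜ).cliqueNum < H₀.cliqueNum := by
      by_contra! hge
      obtain ⟨K, hK⟩ := (H.induce sᶜ).exists_isNClique_cliqueNum
      have hK' := hK.map_embedding (induceHomOfLE H hsub)
      rw [le_antisymm (hK'.card_eq ▸ hK'.isClique.card_le_cliqueNum) hge] at hK'
      obtain ⟨x, hxK, hCx⟩ := C.surjOn_of_card_le_isClique hK'.isClique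
        (by simp [hK'.card_eq, H₀]) (Set.mem_univ (C ⟨a, ha⟩))
      obtain ⟨x, -, rfl⟩ := Finset.mem_map.mp hxK
      have hxa : (x : W) = a := by
        by_contra hxa
        exact x.2 (Or.inr ⟨_, hxa, hCx⟩)
      have hax : (⟨a, ha⟩ : ({b}ᶜ : Set W)) = induceHomOfLE H hsub x := Subtype.ext hxa.symm
      exact hmax _ hK' (hax ▸ hxK)
    have hcol := ((hperf sᶜ fun hb => hb (Or.inl rfl)).mono
      (Nat.le_sub_one_of_lt hlt)).succ_of_isIndepSet hs
    exact hcol.mono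
      ((Nat.sub_add_cancel (Nat.one_le_of_lt hlt)).trans_le (cliqueNum_induce_le _))

/-- Lovász's replication: each vertex `v` of `G` becomes the clique of true twins `π ⁻¹' {v}`. -/
def replicate (G : SimpleGraph V) (π : W → V) : SimpleGraph W where
  Adj x y := x ≠ y ∧ (G.Adj (π x) (π y) ∨ π x = π y)
  symm := ⟨fun _ _ h => ⟨h.1.symm, h.2.imp (fun h => h.symm) Eq.symm⟩⟩
  loopless := ⟨fun _ h => h.1 rfl⟩

@[simp]
theorem replicate_adj {π : W → V} {x y : W} :
    (G.replicate π).Adj x y ↔ x ≠ y ∧ (G.Adj (π x) (π y) ∨ π x = π y) :=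
  Iff.rfl

theorem induce_replicate (π : W → V) (T : Set W) :
    (G.replicate π).induce T = G.replicate (π ∘ Subtype.val) := by
  ext x y
  simp [Subtype.val_injective.ne_iff]

theorem replicate_adj_of_eq {π : W → V} {x y : W} (hxy : x ≠ y) (hπ : π x = π y) :
    (G.replicate π).Adj x y :=
  ⟨hxy, Or.inr hπ⟩

def Embedding.replicate {π : W → V} (hπ : Function.Injective π) : G.replicate π ↪g G where
  toFun := π
  inj' := hπ
  map_rel_iff' {x y} := by
    simp only [Function.Embedding.coeFn_mk, replicate_adj]
    exact ⟨fun h => ⟨fun hxy => h.ne (congrArg π hxy), Or.inl h⟩,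
      fun h => h.2.resolve_right (hπ.ne h.1)⟩

theorem cliqueNum_replicate_sigma_fst_le [Fintype V] (h : V → ℕ) {m : ℕ}
    (hm : ∀ Q : Finset V, G.IsClique (Q : Set V) → ∑ v ∈ Q, h v ≤ m) :
    (G.replicate (Sigma.fst : (Σ v, Fin (h v)) → V)).cliqueNum ≤ m := by
  obtain ⟨K, hK⟩ := (G.replicate (Sigma.fst : (Σ v, Fin (h v)) → V)).exists_isNClique_cliqueNum
  have hQ : G.IsClique (K.image Sigma.fst : Set V) := by
    simp only [coe_image]
    rintro _ ⟨x, hx, rfl⟩ _ ⟨y, hy, rfl⟩ hne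
    exact (hK.isClique hx hy (by rintro rfl; exact hne rfl)).2.resolve_right hne
  calc _ = #K := hK.card_eq.symm
    _ ≤ #((K.image Sigma.fst).sigma fun v => univ) :=
      card_le_card fun x hx => mem_sigma.mpr ⟨mem_image_of_mem _ hx, mem_univ _⟩
    _ = ∑ v ∈ K.image Sigma.fst, h v := by simp [card_sigma]
    _ ≤ m := hm _ hQ

end SimpleGraph

section Perfect

variable {V : Type*} {G : SimpleGraph V}

theorem IsPerfect.colorable_of_embedding [Finite V] {W : Type*} {H : SimpleGraph W}
    (hG : IsPerfect G) (f : H ↪g G) : H.Colorable H.cliqueNum := by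
  have : Finite W := Finite.of_injective f f.injective
  let e := f.isoInduceRange
  have hω : (G.induce (Set.range f)).cliqueNum = H.cliqueNum :=
    le_antisymm (cliqueNum_le_of_embedding e.symm.toEmbedding)
      (cliqueNum_le_of_embedding e.toEmbedding)
  exact (colorable_congr e).mpr (hω ▸ chromaticNumber_le_iff_colorable.mp (hG _).le)

theorem IsPerfect.colorable_replicate [Finite V] (hG : IsPerfect G) {W : Type*} [Finite W]
    (π : W → V) : (G.replicate π).Colorable (G.replicate π).cliqueNum := by
  induction hn : Nat.card W using Nat.strong_induction_on generalizing W with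
  | _ n ih =>
    by_cases hπ : Function.Injective π
    · exact hG.colorable_of_embedding (Embedding.replicate hπ)
    obtain ⟨a, b, hπab, hab⟩ : ∃ a b, π a = π b ∧ a ≠ b := by
      simpa [Function.Injective] using hπ
    refine colorable_cliqueNum_of_twins (replicate_adj_of_eq hab hπab) (fun u hua hub => ?_)
      fun T hbT => ?_
    · simp [hπab, hua.symm, hub.symm]
    · rw [induce_replicate]
      exact ih _ (hn ▸ Finite.card_subtype_lt hbT) _ rfl

theorem IsPerfect.exists_indepSet_cover [Fintype V] (hG : IsPerfect G) (h : V → ℕ) {m : ℕ}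
    (hm : ∀ Q : Finset V, G.IsClique (Q : Set V) → ∑ v ∈ Q, h v ≤ m) :
    ∃ T : Fin m → Finset V, (∀ j, G.IsIndepSet (T j : Set V)) ∧ ∀ v, h v ≤ #{j | v ∈ T j} := by
  let π : (Σ v, Fin (h v)) → V := Sigma.fst
  obtain ⟨C⟩ := (hG.colorable_replicate π).mono (cliqueNum_replicate_sigma_fst_le h hm)
  refine ⟨fun j => {v | ∃ i, C ⟨v, i⟩ = j}, fun j => ?_, fun v => ?_⟩
  · simp only [coe_filter, mem_univ, true_and]
    rintro u ⟨i, rfl⟩ v ⟨i', hi'⟩ huv hadj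
    exact C.valid (show (G.replicate π).Adj ⟨u, i⟩ ⟨v, i'⟩ by simp [π, huv, hadj]) hi'.symm
  · calc h v = #(univ : Finset (Fin (h v))) := by simp
      _ ≤ #{j | v ∈ ({w | ∃ i, C ⟨w, i⟩ = j} : Finset V)} :=
        card_le_card_of_injOn (fun i => C ⟨v, i⟩) (fun i _ => by simp)
          fun i _ i' _ hii' => by
            by_contra hne
            have hadj : (G.replicate π).Adj ⟨v, i⟩ ⟨v, i'⟩ :=
              replicate_adj_of_eq (by simpa using hne) rfl
            exact C.valid hadj hii'

end Perfect

theorem Finset.sum_sum_eq_sum_card_nsmul {ι α β : Type*} [Fintype α] [AddCommMonoid β]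
    (I : Finset ι) (T : ι → Finset α) (f : α → β) :
    ∑ i ∈ I, ∑ a ∈ T i, f a = ∑ a, #{i ∈ I | a ∈ T i} • f a := by
  simp only [← sum_const]
  exact sum_comm' fun i a => by simp

section StableWorth

variable {V : Type*} {G : SimpleGraph V}

theorem card_inter_le_one_of_isClique {Q S : Finset V} (hQ : G.IsClique (Q : Set V))
    (hS : IsStableSet G S) : #(Q ∩ S) ≤ 1 :=
  card_le_one.mpr fun x hx y hy => by_contra fun hne => by
    rw [mem_inter] at hx hy
    exact hS hx.2 hy.2 hne (hQ hx.1 hy.1 hne)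

variable [Fintype V] {w : V → ℝ}

theorem finite_stableSetWeights (G : SimpleGraph V) (w : V → ℝ) (T : Set V) :
    {x : ℝ | ∃ S : Finset V, ↑S ⊆ T ∧ IsStableSet G ↑S ∧ x = ∑ v ∈ S, w v}.Finite :=
  (Set.finite_range fun S : Finset V => ∑ v ∈ S, w v).subset fun _ ⟨S, _, _, hx⟩ => ⟨S, hx.symm⟩

theorem sum_le_stableWorth {S : Finset V} {T : Set V} (hST : ↑S ⊆ T) (hS : IsStableSet G S) :
    ∑ v ∈ S, w v ≤ stableWorth G w T :=
  le_csSup (finite_stableSetWeights G w T).bddAbove ⟨S, hST, hS, rfl⟩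

theorem exists_stableWorth_eq (G : SimpleGraph V) (w : V → ℝ) (T : Set V) :
    ∃ S : Finset V, ↑S ⊆ T ∧ IsStableSet G S ∧ stableWorth G w T = ∑ v ∈ S, w v := by
  have hne : {x : ℝ | ∃ S : Finset V, ↑S ⊆ T ∧ IsStableSet G ↑S ∧ x = ∑ v ∈ S, w v}.Nonempty :=
    ⟨0, ∅, by simp, by simp [IsStableSet], by simp⟩
  exact hne.csSup_mem (finite_stableSetWeights G w T)

theorem le_stableWorth_of_mem {v : V} {T : Set V} (hv : v ∈ T) : w v ≤ stableWorth G w T := by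
  simpa using sum_le_stableWorth (G := G) (w := w) (S := {v}) (by simpa) (by simp [IsStableSet])

end StableWorth

section WeakDuality

variable {V : Type*} [Fintype V] {G : SimpleGraph V} {w : V → ℝ} {y : Finset V → ℝ}

noncomputable def cliqueLoad (G : SimpleGraph V) (y : Finset V → ℝ) (v : V) : ℝ :=
  ∑ Q ∈ (cliquesOf G).filter (fun Q => v ∈ Q), y Q

theorem sum_cliqueLoad_eq (G : SimpleGraph V) (y : Finset V → ℝ) (S : Finset V) :
    ∑ v ∈ S, cliqueLoad G y v = ∑ Q ∈ cliquesOf G, #(Q ∩ S) • y Q := by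
  simp only [cliqueLoad, ← sum_const]
  exact sum_comm' fun v Q => by simp only [mem_filter, mem_inter]; tauto

theorem cliqueLoad_eq_sum_cliques_meeting_singleton (G : SimpleGraph V) (y : Finset V → ℝ)
    (v : V) : cliqueLoad G y v =
      ∑ Q ∈ (cliquesOf G).filter (fun Q : Finset V => ((Q : Set V) ∩ {v}).Nonempty), y Q := by
  simp [cliqueLoad]

theorem sum_le_sum_cliques_meeting (hy : ∀ Q ∈ cliquesOf G, 0 ≤ y Q) {S : Finset V}
    (hS : IsStableSet G S) {T : Set V} (hST : ↑S ⊆ T)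
    (hfeas : ∀ v ∈ S, w v ≤ cliqueLoad G y v) :
    ∑ v ∈ S, w v ≤
      ∑ Q ∈ (cliquesOf G).filter (fun Q : Finset V => ((Q : Set V) ∩ T).Nonempty), y Q := by
  rw [sum_filter]
  calc ∑ v ∈ S, w v ≤ ∑ v ∈ S, cliqueLoad G y v := sum_le_sum hfeas
    _ = ∑ Q ∈ cliquesOf G, #(Q ∩ S) • y Q := sum_cliqueLoad_eq G y S
    _ ≤ _ := sum_le_sum fun Q hQ => ?_
  split_ifs with hQT
  · have hQ' := card_inter_le_one_of_isClique (mem_filter.mp hQ).2.2 hS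
    interval_cases #(Q ∩ S) <;> simp [hy Q hQ]
  · have : Q ∩ S = ∅ := by
      refine eq_empty_of_forall_notMem fun v hv => hQT ⟨v, ?_⟩
      rw [mem_inter] at hv
      exact ⟨hv.1, hST hv.2⟩
    simp [this]

theorem stableWorth_le_sum_cliques_meeting (hy : ∀ Q ∈ cliquesOf G, 0 ≤ y Q) (T : Set V)
    (hfeas : ∀ v ∈ T, w v ≤ cliqueLoad G y v) :
    stableWorth G w T ≤
      ∑ Q ∈ (cliquesOf G).filter (fun Q : Finset V => ((Q : Set V) ∩ T).Nonempty), y Q := by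
  obtain ⟨S, hST, hS, heq⟩ := exists_stableWorth_eq G w T
  exact heq ▸ sum_le_sum_cliques_meeting hy hS hST fun v hv => hfeas v (hST hv)

theorem stableWorth_univ_le_sum (hy : ∀ Q ∈ cliquesOf G, 0 ≤ y Q)
    (hfeas : ∀ v, w v ≤ cliqueLoad G y v) :
    stableWorth G w Set.univ ≤ ∑ Q ∈ cliquesOf G, y Q := by
  have hmeet : ∀ Q ∈ cliquesOf G, ((Q : Set V) ∩ Set.univ).Nonempty := fun Q hQ => by
    simpa using (mem_filter.mp hQ).2.1
  have h := stableWorth_le_sum_cliques_meeting hy Set.univ fun v _ => hfeas v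
  rwa [filter_true_of_mem hmeet] at h

end WeakDuality

section KeyClique

variable {V : Type*} [Fintype V] {G : SimpleGraph V} {w : V → ℝ}

noncomputable def maxStableSets (G : SimpleGraph V) (w : V → ℝ) : Finset (Finset V) :=
  {S | IsStableSet G S ∧ ∑ v ∈ S, w v = stableWorth G w Set.univ}

theorem maxStableSets_nonempty (G : SimpleGraph V) (w : V → ℝ) :
    (maxStableSets G w).Nonempty := by
  obtain ⟨S, -, hS, heq⟩ := exists_stableWorth_eq G w Set.univ
  exact ⟨S, by simp [maxStableSets, hS, heq]⟩

theorem IsPerfect.exists_isClique_inter_maxStableSets (hG : IsPerfect G) (hw : ∀ v, 0 ≤ w v)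
    (hα : 0 < stableWorth G w Set.univ) :
    ∃ Q : Finset V, G.IsClique (Q : Set V) ∧ ∀ S ∈ maxStableSets G w, (Q ∩ S).Nonempty := by
  set M := maxStableSets G w
  by_contra! hnone
  let h : V → ℕ := fun v => #{S ∈ M | v ∈ S}
  -- a clique misses some set of `M` and meets each of the others at most once
  have hm : ∀ Q : Finset V, G.IsClique (Q : Set V) → ∑ v ∈ Q, h v ≤ #M - 1 := by
    intro Q hQ
    obtain ⟨S, hSM, hQS⟩ := hnone Q hQ
    calc ∑ v ∈ Q, h v = ∑ S ∈ M, #(Q ∩ S) := by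
          simp only [h, card_eq_sum_ones]
          exact sum_comm' fun v S => by simp only [mem_filter, mem_inter]; tauto
      _ = ∑ S' ∈ M.erase S, #(Q ∩ S') := by
          rw [← sum_erase_add _ _ hSM, hQS, card_empty, add_zero]
      _ ≤ ∑ S' ∈ M.erase S, 1 := sum_le_sum fun S' hS' =>
          card_inter_le_one_of_isClique hQ (mem_filter.mp (mem_of_mem_erase hS')).2.1
      _ = #M - 1 := by simp [card_erase_of_mem hSM]
  obtain ⟨T, hT, hcover⟩ := hG.exists_indepSet_cover h hm
  set α := stableWorth G w Set.univ
  have hcount : #M • α ≤ (#M - 1) • α :=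
    calc #M • α = ∑ S ∈ M, ∑ v ∈ S, w v := by
          rw [sum_congr rfl fun S hS => (mem_filter.mp hS).2.2, sum_const]
      _ = ∑ v, h v • w v := sum_sum_eq_sum_card_nsmul M id w
      _ ≤ ∑ v, #{j | v ∈ T j} • w v :=
          sum_le_sum fun v _ => nsmul_le_nsmul_left (hw v) (hcover v)
      _ = ∑ j, ∑ v ∈ T j, w v := (sum_sum_eq_sum_card_nsmul univ T w).symm
      _ ≤ ∑ _j : Fin (#M - 1), α :=
          sum_le_sum fun j _ => sum_le_stableWorth (Set.subset_univ _) (hT j)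
      _ = (#M - 1) • α := by simp
  have hM : 1 ≤ #M := card_pos.mpr (maxStableSets_nonempty G w)
  rw [nsmul_eq_mul, nsmul_eq_mul, Nat.cast_sub hM, Nat.cast_one] at hcount
  linarith

theorem IsPerfect.exists_clique_pos_inter_maxStableSets (hG : IsPerfect G) (hw : ∀ v, 0 ≤ w v)
    (hα : 0 < stableWorth G w Set.univ) :
    ∃ Q ∈ cliquesOf G, (∀ v ∈ Q, 0 < w v) ∧ ∀ S ∈ maxStableSets G w, (Q ∩ S).Nonempty := by
  obtain ⟨Q₀, hQ₀, hmeet⟩ := hG.exists_isClique_inter_maxStableSets hw hα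
  have hmeet' : ∀ S ∈ maxStableSets G w, ({v ∈ Q₀ | 0 < w v} ∩ S).Nonempty := by
    intro S hS
    obtain ⟨x, hx⟩ := hmeet S hS
    rw [mem_inter] at hx
    obtain ⟨hSst, hSsum⟩ := (mem_filter.mp hS).2
    rcases (hw x).lt_or_eq with hpos | hzero
    · exact ⟨x, by simp [hx, hpos]⟩
    -- otherwise `S.erase x` is maximum too, so `Q₀` meets `S` twice
    have hS' : S.erase x ∈ maxStableSets G w := by
      simp only [maxStableSets, mem_filter, mem_univ, true_and]
      refine ⟨hSst.mono (by simp), ?_⟩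
      rw [sum_erase_eq_sub hx.2, ← hzero, sub_zero, hSsum]
    obtain ⟨y, hy⟩ := hmeet _ hS'
    rw [mem_inter, mem_erase] at hy
    exact absurd (card_le_one.mp (card_inter_le_one_of_isClique hQ₀ hSst) y
      (mem_inter.mpr ⟨hy.1, hy.2.2⟩) x (mem_inter.mpr hx)) hy.2.1
  obtain ⟨S, hS⟩ := maxStableSets_nonempty G w
  refine ⟨{v ∈ Q₀ | 0 < w v}, ?_, fun v hv => (mem_filter.mp hv).2, hmeet'⟩
  simp only [cliquesOf, mem_filter, mem_univ, true_and]
  exact ⟨(hmeet' S hS).mono inter_subset_left, hQ₀.subset (coe_subset.mpr (filter_subset _ _))⟩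

end KeyClique

section Descent

variable {V : Type*} {G : SimpleGraph V} {w : V → ℝ} {Q : Finset V} {t : ℝ}

noncomputable def subOn (w : V → ℝ) (Q : Finset V) (t : ℝ) (v : V) : ℝ :=
  w v - if v ∈ Q then t else 0

theorem sum_subOn (S : Finset V) : ∑ v ∈ S, subOn w Q t v = ∑ v ∈ S, w v - #(Q ∩ S) • t := by
  simp only [subOn]
  rw [sum_sub_distrib, ← sum_filter, sum_const, filter_mem_eq_inter, inter_comm]

theorem subOn_le (ht : 0 ≤ t) (v : V) : subOn w Q t v ≤ w v := by
  unfold subOn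
  split_ifs <;> linarith

theorem subOn_nonneg (hw : ∀ v, 0 ≤ w v) (htQ : ∀ v ∈ Q, t ≤ w v) (v : V) :
    0 ≤ subOn w Q t v := by
  unfold subOn
  split_ifs with hv
  · linarith [htQ v hv]
  · linarith [hw v]

variable [Fintype V]

theorem sum_lt_stableWorth_of_inter_eq_empty
    (hmeet : ∀ S ∈ maxStableSets G w, (Q ∩ S).Nonempty) {S : Finset V} (hS : IsStableSet G S)
    (hQS : Q ∩ S = ∅) :
    ∑ v ∈ S, w v < stableWorth G w Set.univ := by
  refine (sum_le_stableWorth (Set.subset_univ _) hS).lt_of_ne fun heq => ?_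
  simpa [hQS] using hmeet S (by simp [maxStableSets, hS, heq])

theorem stableWorth_subOn_eq_sub_and_maxStableSets_subset (hQ : G.IsClique (Q : Set V))
    (hmeet : ∀ S ∈ maxStableSets G w, (Q ∩ S).Nonempty) (ht : 0 ≤ t)
    (hslack : ∀ S : Finset V, IsStableSet G S → Q ∩ S = ∅ →
      t ≤ stableWorth G w Set.univ - ∑ v ∈ S, w v) :
    stableWorth G (subOn w Q t) Set.univ = stableWorth G w Set.univ - t ∧
      maxStableSets G w ⊆ maxStableSets G (subOn w Q t) := by
  set α := stableWorth G w Set.univ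
  have hmax : ∀ S ∈ maxStableSets G w, ∑ v ∈ S, subOn w Q t v = α - t := by
    intro S hS
    obtain ⟨hSst, hSsum⟩ := (mem_filter.mp hS).2
    have hone : #(Q ∩ S) = 1 :=
      (card_inter_le_one_of_isClique hQ hSst).antisymm (card_pos.mpr (hmeet S hS))
    rw [sum_subOn, hone, hSsum, one_smul]
  have hle : ∀ S : Finset V, IsStableSet G S → ∑ v ∈ S, subOn w Q t v ≤ α - t := by
    intro S hS
    rw [sum_subOn]
    rcases (Q ∩ S).eq_empty_or_nonempty with hQS | hQS
    · simp only [hQS, card_empty, zero_smul, sub_zero]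
      linarith [hslack S hS hQS]
    · have hsum : ∑ v ∈ S, w v ≤ α := sum_le_stableWorth (Set.subset_univ _) hS
      have hcard : t ≤ #(Q ∩ S) * t :=
        le_mul_of_one_le_left ht (by exact_mod_cast card_pos.mpr hQS)
      rw [nsmul_eq_mul]
      linarith
  have hworth : stableWorth G (subOn w Q t) Set.univ = α - t := by
    obtain ⟨S, -, hS, heq⟩ := exists_stableWorth_eq G (subOn w Q t) Set.univ
    obtain ⟨S₀, hS₀⟩ := maxStableSets_nonempty G w
    refine (heq ▸ hle S hS).antisymm ?_
    exact hmax S₀ hS₀ ▸ sum_le_stableWorth (Set.subset_univ _) (mem_filter.mp hS₀).2.1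
  refine ⟨hworth, fun S hS => ?_⟩
  simp [maxStableSets, (mem_filter.mp hS).2.1, hmax S hS, hworth]

noncomputable def weightSupport (w : V → ℝ) : Finset V := {v | 0 < w v}

theorem weightSupport_subOn_subset (ht : 0 ≤ t) :
    weightSupport (subOn w Q t) ⊆ weightSupport w := fun v hv => by
  simp only [weightSupport, mem_filter, mem_univ, true_and] at hv ⊢
  exact hv.trans_le (subOn_le ht v)

theorem IsPerfect.exists_descent_step (hG : IsPerfect G) (hw : ∀ v, 0 ≤ w v)
    (hα : 0 < stableWorth G w Set.univ) :
    ∃ Q ∈ cliquesOf G, ∃ t > 0, (∀ v, 0 ≤ subOn w Q t v) ∧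
      stableWorth G (subOn w Q t) Set.univ = stableWorth G w Set.univ - t ∧
      (weightSupport (subOn w Q t) ⊂ weightSupport w ∨
        weightSupport (subOn w Q t) = weightSupport w ∧
          maxStableSets G w ⊂ maxStableSets G (subOn w Q t)) := by
  obtain ⟨Q, hQ, hQpos, hmeet⟩ := hG.exists_clique_pos_inter_maxStableSets hw hα
  set α := stableWorth G w Set.univ
  obtain ⟨v₁, hv₁, hv₁min⟩ := Q.exists_min_image w (mem_filter.mp hQ).2.1
  obtain ⟨S₂, hS₂, hS₂min⟩ :=
    ({S | IsStableSet G S ∧ Q ∩ S = ∅} : Finset (Finset V)).exists_min_image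
      (fun S => α - ∑ v ∈ S, w v) ⟨∅, mem_filter.mpr ⟨mem_univ _, by simp [IsStableSet], by simp⟩⟩
  obtain ⟨hS₂st, hQS₂⟩ := (mem_filter.mp hS₂).2
  set t := min (w v₁) (α - ∑ v ∈ S₂, w v)
  have ht : 0 < t := lt_min (hQpos v₁ hv₁)
    (sub_pos.mpr (sum_lt_stableWorth_of_inter_eq_empty hmeet hS₂st hQS₂))
  obtain ⟨hworth, hMsub⟩ := stableWorth_subOn_eq_sub_and_maxStableSets_subset
    (mem_filter.mp hQ).2.2 hmeet ht.le
    fun S hS hQS => (min_le_right _ _).trans (hS₂min S (by simp [hS, hQS]))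
  have hsupp := weightSupport_subOn_subset (w := w) (Q := Q) ht.le
  refine ⟨Q, hQ, t, ht, subOn_nonneg hw fun v hv => (min_le_left _ _).trans (hv₁min v hv),
    hworth, ?_⟩
  rcases min_choice (w v₁) (α - ∑ v ∈ S₂, w v) with h | h
  · -- the weight of `v₁` drops to zero
    refine .inl ((ssubset_iff_of_subset hsupp).mpr
      ⟨v₁, by simp [weightSupport, hQpos v₁ hv₁], ?_⟩)
    simp [weightSupport, subOn, hv₁, t, h]
  · -- `S₂` becomes a maximum stable set
    have hS₂M : S₂ ∈ maxStableSets G (subOn w Q t) := by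
      simp only [maxStableSets, mem_filter, mem_univ, true_and]
      refine ⟨hS₂st, ?_⟩
      rw [hworth, sum_subOn, hQS₂, card_empty, zero_smul, sub_zero]
      change _ = α - min _ _
      rw [h]
      ring
    have hS₂M' : S₂ ∉ maxStableSets G w := fun hS₂M' => by
      simpa [hQS₂] using hmeet S₂ hS₂M'
    rcases hsupp.eq_or_ssubset with heq | hlt
    · exact .inr ⟨heq, (ssubset_iff_of_subset hMsub).mpr ⟨S₂, hS₂M, hS₂M'⟩⟩
    · exact .inl hlt

end Descent

section StrongDuality

variable {V : Type*} [Fintype V] {G : SimpleGraph V}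

theorem cliqueLoad_add_single {y : Finset V → ℝ} {Q : Finset V} (hQ : Q ∈ cliquesOf G) (t : ℝ)
    (v : V) : cliqueLoad G (y + Pi.single Q t) v = cliqueLoad G y v + if v ∈ Q then t else 0 := by
  simp only [cliqueLoad, Pi.add_apply, sum_add_distrib, sum_pi_single', mem_filter, hQ, true_and]

theorem IsPerfect.exists_cliqueLoad_sum_eq_stableWorth (hG : IsPerfect G) (w : V → ℝ)
    (hw : ∀ v, 0 ≤ w v) :
    ∃ y : Finset V → ℝ, (∀ Q ∈ cliquesOf G, 0 ≤ y Q) ∧ (∀ v, w v ≤ cliqueLoad G y v) ∧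
      ∑ Q ∈ cliquesOf G, y Q = stableWorth G w Set.univ := by
  by_cases hzero : ∀ v, w v = 0
  · obtain ⟨S, -, -, hS⟩ := exists_stableWorth_eq G w Set.univ
    exact ⟨0, by simp, by simp [cliqueLoad, hzero], by simp [hS, hzero]⟩
  push Not at hzero
  obtain ⟨u, hu⟩ := hzero
  have hα : 0 < stableWorth G w Set.univ :=
    ((hw u).lt_of_ne' hu).trans_le (le_stableWorth_of_mem (Set.mem_univ u))
  obtain ⟨Q, hQ, t, ht, hw', hworth, hdec⟩ := hG.exists_descent_step hw hα
  obtain ⟨y, hy, hfeas, hsum⟩ := hG.exists_cliqueLoad_sum_eq_stableWorth _ hw'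
  have hsingle : 0 ≤ Pi.single (M := fun _ => ℝ) Q t := Pi.single_nonneg.mpr ht.le
  refine ⟨y + Pi.single Q t, fun R hR => add_nonneg (hy R hR) (hsingle R), fun v => ?_, ?_⟩
  · rw [cliqueLoad_add_single hQ]
    have := hfeas v
    simp only [subOn] at this
    linarith
  · rw [Pi.add_def, sum_add_distrib, sum_pi_single', if_pos hQ, hsum, hworth]
    ring
termination_by (#(weightSupport w), Fintype.card (Finset V) - #(maxStableSets G w))
decreasing_by
  rcases hdec with hlt | ⟨heq, hlt⟩
  · exact Prod.Lex.left _ _ (card_lt_card hlt)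
  · rw [heq]
    exact Prod.Lex.right _ (Nat.sub_lt_sub_left (card_lt_card hlt |>.trans_le (card_le_univ _))
      (card_lt_card hlt))

end StrongDuality

theorem stable_set_game_core_iff_dual_optimal
    {V : Type*} [Fintype V] (G : SimpleGraph V) (hG : IsPerfect G)
    (w : V → ℝ) (hw : ∀ v, 0 ≤ w v)
    (y : Finset V → ℝ) (hy : ∀ Q ∈ cliquesOf G, 0 ≤ y Q) :
    -- `y` is in the core of the stable set game
    ((∑ Q ∈ cliquesOf G, y Q = stableWorth G w Set.univ) ∧
      ∀ T : Set V,
        stableWorth G w T ≤ ∑ Q ∈ (cliquesOf G).filter (fun Q : Finset V => ((Q : Set V) ∩ T).Nonempty), y Q)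
    ↔
    -- `y` is an optimal solution of the dual LP
    ((∀ v : V, w v ≤ ∑ Q ∈ (cliquesOf G).filter (fun Q => v ∈ Q), y Q) ∧
      ∀ y' : Finset V → ℝ, (∀ Q ∈ cliquesOf G, 0 ≤ y' Q) →
        (∀ v : V, w v ≤ ∑ Q ∈ (cliquesOf G).filter (fun Q => v ∈ Q), y' Q) →
        ∑ Q ∈ cliquesOf G, y Q ≤ ∑ Q ∈ cliquesOf G, y' Q) := by
  constructor
  · rintro ⟨hsum, hcore⟩
    refine ⟨fun v => ?_, fun y' hy' hfeas' => hsum ▸ stableWorth_univ_le_sum hy' hfeas'⟩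
    rw [← cliqueLoad, cliqueLoad_eq_sum_cliques_meeting_singleton]
    exact (le_stableWorth_of_mem (Set.mem_singleton v)).trans (hcore {v})
  · rintro ⟨hfeas, hopt⟩
    obtain ⟨y₀, hy₀, hfeas₀, hsum₀⟩ := hG.exists_cliqueLoad_sum_eq_stableWorth w hw
    exact ⟨(hsum₀ ▸ hopt y₀ hy₀ hfeas₀).antisymm (stableWorth_univ_le_sum hy hfeas),
      fun T => stableWorth_le_sum_cliques_meeting hy T fun v _ => hfeas v⟩
end

section
/- Let M be a matroid on a finite ground set U with rank function r, with no loops (r({e}) = 1 for every e ∈ U), and let w : U → ℝ be nonnegative element weights. A function y assigning a nonnegative real y_S to each nonempty subset S ⊆ U is in the core of the matroid independent set game on (M,w) if and only if y is an optimal solution of the dual LP, i.e., y is dual-feasible (for every e ∈ U, Σ_{S : e ∈ S} y_S ≥ w(e)) and Σ_{S ⊆ U} r(S)·y_S is minimum among all dual-feasible nonnegative functions. -/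
open scoped Classical

noncomputable def matroidRank {α : Type*} (M : Matroid α) (S : Set α) : ℕ :=
  sSup {n : ℕ | ∃ I ⊆ S, M.Indep I ∧ I.ncard = n}

/-- `worth(T)`: the maximum total weight of an independent set contained in `T`. -/
noncomputable def matroidWorth {α : Type*} [Fintype α] (M : Matroid α) (w : α → ℝ)
    (T : Set α) : ℝ :=
  sSup {x : ℝ | ∃ I : Finset α, ↑I ⊆ T ∧ M.Indep ↑I ∧ x = ∑ e ∈ I, w e}

/-!
Core ⇒ optimal: the one-element coalitions `{e}` (which have rank one) are exactly the dual
constraints, and weak duality bounds every feasible dual value below by `worth(U)`.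
Optimal ⇒ core: weak duality restricted to a coalition `T` gives all coalition inequalities, and
strong duality, in the form of an explicit feasible dual solution of value at most `worth(U)`,
gives efficiency.
-/

open Finset

section Rank

variable {α : Type*} [Finite α] {M : Matroid α} {I S : Set α}

lemma Matroid.IsBasis'.matroidRank_eq (hI : M.IsBasis' I S) : matroidRank M S = I.ncard := by
  refine IsGreatest.csSup_eq ⟨⟨I, hI.subset, hI.indep, rfl⟩, ?_⟩
  rintro n ⟨J, hJS, hJ, rfl⟩
  have hJI : J.encard ≤ I.encard := hI.encard_eq_eRk ▸ hJ.encard_le_eRk_of_subset hJS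
  rwa [← J.toFinite.cast_ncard_eq, ← I.toFinite.cast_ncard_eq, Nat.cast_le] at hJI

lemma Matroid.Indep.ncard_le_matroidRank (hI : M.Indep I) (hIS : I ⊆ S) :
    I.ncard ≤ matroidRank M S := by
  obtain ⟨B, hB, hIB⟩ := hI.subset_isBasis'_of_subset hIS
  rw [hB.matroidRank_eq]
  exact Set.ncard_le_ncard hIB

lemma Matroid.indep_of_matroidRank_eq_ncard (h : matroidRank M S = S.ncard) : M.Indep S := by
  obtain ⟨I, hI⟩ := M.exists_isBasis' S
  rw [hI.matroidRank_eq] at h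
  rw [← Set.eq_of_subset_of_ncard_le hI.subset h.ge]
  exact hI.indep

end Rank

section Worth

variable {α : Type*} [Fintype α] {M : Matroid α} {w : α → ℝ}

lemma finite_setOf_indep_sum (M : Matroid α) (w : α → ℝ) (T : Set α) :
    {x : ℝ | ∃ I : Finset α, ↑I ⊆ T ∧ M.Indep ↑I ∧ x = ∑ e ∈ I, w e}.Finite := by
  refine (Set.finite_range fun I : Finset α => ∑ e ∈ I, w e).subset ?_
  rintro x ⟨I, -, -, rfl⟩
  exact ⟨I, rfl⟩

lemma exists_indep_sum_eq_matroidWorth (M : Matroid α) (w : α → ℝ) (T : Set α) :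
    ∃ I : Finset α, ↑I ⊆ T ∧ M.Indep ↑I ∧ matroidWorth M w T = ∑ e ∈ I, w e := by
  refine Set.Nonempty.csSup_mem ?_ (finite_setOf_indep_sum M w T)
  exact ⟨0, ∅, by simp, by simp, by simp⟩

lemma sum_le_matroidWorth {T : Set α} {I : Finset α} (hIT : ↑I ⊆ T) (hI : M.Indep ↑I) :
    ∑ e ∈ I, w e ≤ matroidWorth M w T :=
  le_csSup (finite_setOf_indep_sum M w T).bddAbove ⟨I, hIT, hI, rfl⟩

/-- Lowering all weights on `T` by a common lower bound `c` costs exactly `c · r(T)` on a basis of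
`T`, and any independent subset of `T' ⊆ T` extends to such a basis. -/
lemma matroidWorth_sub_const_add_le {T' T : Set α} (hT : T' ⊆ T) {c : ℝ}
    (hc : ∀ e ∈ T, c ≤ w e) :
    matroidWorth M (fun e => w e - c) T' + matroidRank M T * c ≤ matroidWorth M w T := by
  obtain ⟨I, hIT', hI, hval⟩ := exists_indep_sum_eq_matroidWorth M (fun e => w e - c) T'
  obtain ⟨B, hB, hIB⟩ := hI.subset_isBasis'_of_subset (hIT'.trans hT)
  obtain ⟨B, rfl⟩ := B.toFinite.exists_finset_coe
  have hIB : I ⊆ B := by exact_mod_cast hIB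
  calc matroidWorth M (fun e => w e - c) T' + matroidRank M T * c
      = ∑ e ∈ I, (w e - c) + B.card * c := by
        rw [hval, hB.matroidRank_eq, Set.ncard_coe_finset]
    _ ≤ ∑ e ∈ B, (w e - c) + B.card * c := by
        gcongr
        exact fun e he _ => sub_nonneg.2 (hc e (hB.subset he))
    _ = ∑ e ∈ B, w e := by
        rw [sum_sub_distrib, sum_const, nsmul_eq_mul]
        ring
    _ ≤ matroidWorth M w T := sum_le_matroidWorth hB.subset hB.indep

end Worth

section DualLP

variable {α : Type*} [Fintype α] {M : Matroid α} {w : α → ℝ}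

noncomputable def dualCover (y : Finset α → ℝ) (e : α) : ℝ :=
  ∑ S ∈ (univ : Finset (Finset α)).filter (fun S => e ∈ S), y S

noncomputable def dualValue (M : Matroid α) (y : Finset α → ℝ) : ℝ :=
  ∑ S ∈ (univ : Finset (Finset α)).filter (fun S => S.Nonempty), (matroidRank M ↑S : ℝ) * y S

lemma dualCover_add (y z : Finset α → ℝ) (e : α) :
    dualCover (y + z) e = dualCover y e + dualCover z e :=
  sum_add_distrib

lemma dualCover_single (T : Finset α) (c : ℝ) (e : α) :
    dualCover (Pi.single T c) e = if e ∈ T then c else 0 := by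
  simp [dualCover, sum_pi_single']

lemma dualCover_nonneg {y : Finset α → ℝ} (hy : ∀ S, 0 ≤ y S) (e : α) : 0 ≤ dualCover y e :=
  sum_nonneg fun S _ => hy S

lemma dualValue_add (y z : Finset α → ℝ) :
    dualValue M (y + z) = dualValue M y + dualValue M z := by
  simp only [dualValue, Pi.add_apply, mul_add, sum_add_distrib]

lemma dualValue_single {T : Finset α} (hT : T.Nonempty) (c : ℝ) :
    dualValue M (Pi.single T c) = matroidRank M ↑T * c := by
  simp [dualValue, Pi.single_apply, hT]

lemma sum_dualCover (y : Finset α → ℝ) (I : Finset α) :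
    ∑ e ∈ I, dualCover y e = ∑ S, ((S ∩ I).card : ℝ) * y S := by
  simp only [dualCover, sum_filter]
  rw [sum_comm]
  refine sum_congr rfl fun S _ => ?_
  rw [sum_ite_mem, sum_const, inter_comm, nsmul_eq_mul]

/-- Weak duality, localized to a coalition `T`: every independent `I ⊆ T` meets each `S` in an
independent subset of `S ∩ T`. -/
theorem matroidWorth_le_sum_inter {y : Finset α → ℝ} (hy : ∀ S : Finset α, S.Nonempty → 0 ≤ y S)
    {T : Finset α} (hfeas : ∀ e ∈ T, w e ≤ dualCover y e) :
    matroidWorth M w ↑T ≤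
      ∑ S ∈ (univ : Finset (Finset α)).filter (fun S => (S ∩ T).Nonempty),
        (matroidRank M ↑(S ∩ T) : ℝ) * y S := by
  obtain ⟨I, hIT, hI, hval⟩ := exists_indep_sum_eq_matroidWorth M w ↑T
  have hIT : I ⊆ T := by exact_mod_cast hIT
  have hSI : ∀ S : Finset α, S ∩ I ⊆ S ∩ T := fun S => inter_subset_inter_left hIT
  calc matroidWorth M w ↑T = ∑ e ∈ I, w e := hval
    _ ≤ ∑ e ∈ I, dualCover y e := sum_le_sum fun e he => hfeas e (hIT he)
    _ = ∑ S ∈ (univ : Finset (Finset α)).filter (fun S => (S ∩ T).Nonempty),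
          ((S ∩ I).card : ℝ) * y S := by
        rw [sum_dualCover, sum_filter]
        refine sum_congr rfl fun S _ => ?_
        split_ifs with hST
        · rfl
        · rw [not_nonempty_iff_eq_empty.1 fun h => hST (h.mono (hSI S))]
          simp
    _ ≤ _ := by
        refine sum_le_sum fun S hS => mul_le_mul_of_nonneg_right ?_ ?_
        · have := (hI.subset (coe_subset.2 inter_subset_right)).ncard_le_matroidRank
            (S := ↑(S ∩ T)) (coe_subset.2 (hSI S))
          rw [Set.ncard_coe_finset] at this
          exact_mod_cast this
        · exact hy S ((mem_filter.1 hS).2.mono inter_subset_left)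

theorem matroidWorth_le_dualValue {y : Finset α → ℝ} (hy : ∀ S : Finset α, S.Nonempty → 0 ≤ y S)
    (hfeas : ∀ e, w e ≤ dualCover y e) : matroidWorth M w Set.univ ≤ dualValue M y := by
  simpa [dualValue] using matroidWorth_le_sum_inter (M := M) hy (T := univ) fun e _ => hfeas e

/-- Strong duality, by induction on `T`: the minimum weight `c` on `T` is paid by the dual
variable of `T` itself, and the rest by induction on the elements of weight `> c`. -/
theorem exists_dualValue_le_matroidWorth (M : Matroid α) (T : Finset α) (w : α → ℝ)
    (hw : ∀ e ∈ T, 0 ≤ w e) :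
    ∃ y : Finset α → ℝ, (∀ S, 0 ≤ y S) ∧ (∀ e ∈ T, w e ≤ dualCover y e) ∧
      dualValue M y ≤ matroidWorth M w ↑T := by
  induction T using Finset.strongInduction generalizing w with
  | H T ih =>
  rcases T.eq_empty_or_nonempty with rfl | hT
  · refine ⟨0, fun _ => le_rfl, by simp, ?_⟩
    simpa [dualValue] using sum_le_matroidWorth (M := M) (w := w) (I := ∅) (by simp) (by simp)
  obtain ⟨e₀, he₀, hmin⟩ := T.exists_min_image w hT
  set c := w e₀
  set T' := T.filter fun e => c < w e
  have hT' : T' ⊂ T := filter_ssubset.2 ⟨e₀, he₀, lt_irrefl c⟩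
  obtain ⟨y', hy', hfeas', hval'⟩ := ih T' hT' (fun e => w e - c)
    fun e he => (sub_pos.2 (mem_filter.1 he).2).le
  have hc : 0 ≤ Pi.single (M := fun _ => ℝ) T c := Pi.single_nonneg.2 (hw e₀ he₀)
  refine ⟨y' + Pi.single T c, fun S => add_nonneg (hy' S) (hc S), fun e he => ?_, ?_⟩
  · rw [dualCover_add, dualCover_single, if_pos he]
    by_cases hce : c < w e
    · linarith [hfeas' e (mem_filter.2 ⟨he, hce⟩)]
    · linarith [dualCover_nonneg hy' e]
  · rw [dualValue_add, dualValue_single hT]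
    linarith [matroidWorth_sub_const_add_le (M := M) (coe_subset.2 hT'.subset)
      (fun e he => hmin e (mem_coe.1 he))]

lemma sum_inter_singleton_eq_dualCover (y : Finset α → ℝ) {e : α}
    (he : matroidRank M {e} = 1) :
    ∑ S ∈ (univ : Finset (Finset α)).filter (fun S => (S ∩ {e}).Nonempty),
      (matroidRank M ↑(S ∩ {e}) : ℝ) * y S = dualCover y e := by
  unfold dualCover
  rw [filter_congr (q := fun S => e ∈ S) fun S _ => by simp [Finset.Nonempty]]
  refine sum_congr rfl fun S hS => ?_
  rw [inter_singleton_of_mem (mem_filter.1 hS).2, coe_singleton, he, Nat.cast_one, one_mul]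

end DualLP

theorem matroid_game_core_iff_dual_optimal_general
    {α : Type*} [Fintype α] (M : Matroid α)
    (hloopless : ∀ e : α, matroidRank M {e} = 1)
    (w : α → ℝ) (hw : ∀ e, 0 ≤ w e)
    (y : Finset α → ℝ) (hy : ∀ S : Finset α, S.Nonempty → 0 ≤ y S) :
    -- `y` is in the core of the matroid independent set game
    ((∑ S ∈ (Finset.univ : Finset (Finset α)).filter (fun S => S.Nonempty),
        (matroidRank M ↑S : ℝ) * y S = matroidWorth M w Set.univ) ∧
      ∀ T : Finset α,
        matroidWorth M w ↑T ≤
          ∑ S ∈ (Finset.univ : Finset (Finset α)).filter (fun S => (S ∩ T).Nonempty),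
            (matroidRank M ↑(S ∩ T) : ℝ) * y S)
    ↔
    -- `y` is an optimal solution of the dual LP
    ((∀ e : α, w e ≤ ∑ S ∈ (Finset.univ : Finset (Finset α)).filter (fun S => e ∈ S), y S) ∧
      ∀ y' : Finset α → ℝ, (∀ S : Finset α, S.Nonempty → 0 ≤ y' S) →
        (∀ e : α, w e ≤ ∑ S ∈ (Finset.univ : Finset (Finset α)).filter (fun S => e ∈ S), y' S) →
        ∑ S ∈ (Finset.univ : Finset (Finset α)).filter (fun S => S.Nonempty),
            (matroidRank M ↑S : ℝ) * y S ≤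
          ∑ S ∈ (Finset.univ : Finset (Finset α)).filter (fun S => S.Nonempty),
            (matroidRank M ↑S : ℝ) * y' S) := by
  constructor
  · rintro ⟨hval, hcore⟩
    have hfeas (e : α) : w e ≤ dualCover y e := by
      have hsingle := M.indep_of_matroidRank_eq_ncard (S := {e}) (by simp [hloopless e])
      calc w e ≤ matroidWorth M w ↑({e} : Finset α) := by
            simpa using sum_le_matroidWorth (w := w) (I := {e}) le_rfl (by simpa using hsingle)
        _ ≤ _ := hcore {e}
        _ = dualCover y e := sum_inter_singleton_eq_dualCover y (hloopless e)
    exact ⟨hfeas, fun y' hy' hfeas' => hval ▸ matroidWorth_le_dualValue hy' hfeas'⟩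
  · rintro ⟨hfeas, hopt⟩
    obtain ⟨y₀, hy₀, hfeas₀, hval₀⟩ := exists_dualValue_le_matroidWorth M univ w fun e _ => hw e
    refine ⟨le_antisymm ?_ (matroidWorth_le_dualValue hy hfeas), fun T =>
      matroidWorth_le_sum_inter hy fun e _ => hfeas e⟩
    calc dualValue M y ≤ dualValue M y₀ := hopt y₀ (fun S _ => hy₀ S) fun e => hfeas₀ e (mem_univ e)
      _ ≤ matroidWorth M w Set.univ := by simpa using hval₀

theorem matroid_game_core_iff_dual_optimal
    {α : Type*} [Fintype α] (M : Matroid α) (hE : M.E = Set.univ)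
    (hloopless : ∀ e : α, matroidRank M {e} = 1)
    (w : α → ℝ) (hw : ∀ e, 0 ≤ w e)
    (y : Finset α → ℝ) (hy : ∀ S : Finset α, S.Nonempty → 0 ≤ y S) :
    -- `y` is in the core of the matroid independent set game
    ((∑ S ∈ (Finset.univ : Finset (Finset α)).filter (fun S => S.Nonempty),
        (matroidRank M ↑S : ℝ) * y S = matroidWorth M w Set.univ) ∧
      ∀ T : Finset α,
        matroidWorth M w ↑T ≤
          ∑ S ∈ (Finset.univ : Finset (Finset α)).filter (fun S => (S ∩ T).Nonempty),
            (matroidRank M ↑(S ∩ T) : ℝ) * y S)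
    ↔
    -- `y` is an optimal solution of the dual LP
    ((∀ e : α, w e ≤ ∑ S ∈ (Finset.univ : Finset (Finset α)).filter (fun S => e ∈ S), y S) ∧
      ∀ y' : Finset α → ℝ, (∀ S : Finset α, S.Nonempty → 0 ≤ y' S) →
        (∀ e : α, w e ≤ ∑ S ∈ (Finset.univ : Finset (Finset α)).filter (fun S => e ∈ S), y' S) →
        ∑ S ∈ (Finset.univ : Finset (Finset α)).filter (fun S => S.Nonempty),
            (matroidRank M ↑S : ℝ) * y S ≤
          ∑ S ∈ (Finset.univ : Finset (Finset α)).filter (fun S => S.Nonempty),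
            (matroidRank M ↑S : ℝ) * y' S) :=
  matroid_game_core_iff_dual_optimal_general M hloopless w hw y hy
end

section
/- (Shapley–Shubik) Let G = (U, V, E) be a finite bipartite graph with positive edge weights w : E → ℝ. A pair of nonnegative functions u : U → ℝ and v : V → ℝ is in the core of the assignment game on (G,w) if and only if (u,v) is an optimal solution of the dual LP, i.e., u(i) + v(j) ≥ w(i,j) for every edge (i,j) ∈ E, and Σ_{i ∈ U} u(i) + Σ_{j ∈ V} v(j) is minimum among all nonnegative pairs satisfying these constraints. -/
open scoped Classical

set_option linter.unusedSectionVars false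
set_option maxHeartbeats 1000000

/-- A matching in the bipartite graph with edge set `E ⊆ U × V`: a set of edges,
no two of which share an endpoint. -/
def IsBipMatching {U V : Type*} (E : Finset (U × V)) (M : Finset (U × V)) : Prop :=
  M ⊆ E ∧ ∀ e ∈ M, ∀ f ∈ M, e ≠ f → e.1 ≠ f.1 ∧ e.2 ≠ f.2

/-- The worth `p(S_u ∪ S_v)`: the maximum weight of a matching using only
vertices in `S_u ∪ S_v`. -/
noncomputable def assignWorth {U V : Type*} [Fintype U] [Fintype V]
    (E : Finset (U × V)) (w : U × V → ℝ) (Su : Finset U) (Sv : Finset V) : ℝ :=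
  sSup {x : ℝ | ∃ M : Finset (U × V), IsBipMatching E M ∧
    (∀ e ∈ M, e.1 ∈ Su ∧ e.2 ∈ Sv) ∧ x = ∑ e ∈ M, w e}

section helpers

variable {U V : Type*} [Fintype U] [Fintype V] {E : Finset (U × V)} {w : U × V → ℝ}
  {Su : Finset U} {Sv : Finset V}

def worthSet (E : Finset (U × V)) (w : U × V → ℝ) (Su : Finset U) (Sv : Finset V) : Set ℝ :=
  {x : ℝ | ∃ M : Finset (U × V), IsBipMatching E M ∧
    (∀ e ∈ M, e.1 ∈ Su ∧ e.2 ∈ Sv) ∧ x = ∑ e ∈ M, w e}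

lemma assignWorth_eq : assignWorth E w Su Sv = sSup (worthSet E w Su Sv) := rfl

lemma zero_mem_worthSet : (0 : ℝ) ∈ worthSet E w Su Sv :=
  ⟨∅, ⟨Finset.empty_subset _, by simp⟩, by simp, by simp⟩

lemma worthSet_finite : (worthSet E w Su Sv).Finite := by
  apply Set.Finite.subset (Finset.finite_toSet (E.powerset.image fun M => ∑ e ∈ M, w e))
  rintro x ⟨M, hM, -, rfl⟩
  simp only [Finset.coe_image, Set.mem_image, Finset.mem_coe, Finset.mem_powerset]
  exact ⟨M, hM.1, rfl⟩

lemma le_assignWorth {x : ℝ} (hx : x ∈ worthSet E w Su Sv) : x ≤ assignWorth E w Su Sv :=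
  le_csSup worthSet_finite.bddAbove hx

lemma assignWorth_le {c : ℝ} (h : ∀ x ∈ worthSet E w Su Sv, x ≤ c) :
    assignWorth E w Su Sv ≤ c :=
  csSup_le ⟨0, zero_mem_worthSet⟩ h

lemma assignWorth_nonneg : 0 ≤ assignWorth E w Su Sv := le_assignWorth zero_mem_worthSet

lemma assignWorth_mem : assignWorth E w Su Sv ∈ worthSet E w Su Sv :=
  Set.Nonempty.csSup_mem ⟨0, zero_mem_worthSet⟩ worthSet_finite

lemma matching_sum_le {M : Finset (U × V)} (hM : IsBipMatching E M)
    {u : U → ℝ} {v : V → ℝ} (hu : ∀ i, 0 ≤ u i) (hv : ∀ j, 0 ≤ v j)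
    (hend : ∀ e ∈ M, e.1 ∈ Su ∧ e.2 ∈ Sv)
    (hfeas : ∀ e ∈ E, w e ≤ u e.1 + v e.2) :
    ∑ e ∈ M, w e ≤ ∑ i ∈ Su, u i + ∑ j ∈ Sv, v j := by
  have hinj1 : ∀ e ∈ M, ∀ f ∈ M, e.1 = f.1 → e = f := by
    intro e he f hf h
    by_contra hne
    exact (hM.2 e he f hf hne).1 h
  have hinj2 : ∀ e ∈ M, ∀ f ∈ M, e.2 = f.2 → e = f := by
    intro e he f hf h
    by_contra hne
    exact (hM.2 e he f hf hne).2 h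
  calc ∑ e ∈ M, w e ≤ ∑ e ∈ M, (u e.1 + v e.2) :=
        Finset.sum_le_sum fun e he => hfeas e (hM.1 he)
    _ = ∑ e ∈ M, u e.1 + ∑ e ∈ M, v e.2 := Finset.sum_add_distrib
    _ ≤ ∑ i ∈ Su, u i + ∑ j ∈ Sv, v j := by
        apply add_le_add
        · rw [← Finset.sum_image hinj1]
          exact Finset.sum_le_sum_of_subset_of_nonneg
            (Finset.image_subset_iff.mpr fun e he => (hend e he).1) (fun i _ _ => hu i)
        · rw [← Finset.sum_image hinj2]
          exact Finset.sum_le_sum_of_subset_of_nonneg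
            (Finset.image_subset_iff.mpr fun e he => (hend e he).2) (fun j _ _ => hv j)

end helpers

section duality

variable {X : Type*} [Fintype X] [Nonempty X]

lemma exists_min_dual (W : X → X → ℝ) :
    ∃ u v : X → ℝ, (∀ x y, W x y ≤ u x + v y) ∧
      ∀ u' v' : X → ℝ, (∀ x y, W x y ≤ u' x + v' y) →
        ∑ x, u x + ∑ x, v x ≤ ∑ x, u' x + ∑ x, v' x := by
  set n : ℝ := (Fintype.card X : ℝ) with hn
  have hn1 : (1 : ℝ) ≤ n := by
    have h := Fintype.card_pos_iff.mpr (inferInstance : Nonempty X)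
    rw [hn]; exact_mod_cast h
  set B : ℝ := ∑ x : X, ∑ y : X, |W x y| with hB
  have hB0 : 0 ≤ B := Finset.sum_nonneg fun x _ => Finset.sum_nonneg fun y _ => abs_nonneg _
  have hWB : ∀ x y : X, |W x y| ≤ B := by
    intro x y
    calc |W x y| ≤ ∑ z : X, |W x z| :=
          Finset.single_le_sum (f := fun z => |W x z|) (fun z _ => abs_nonneg _) (Finset.mem_univ y)
      _ ≤ B := Finset.single_le_sum (f := fun t => ∑ z : X, |W t z|)
          (fun t _ => Finset.sum_nonneg fun z _ => abs_nonneg _) (Finset.mem_univ x)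
  set C : ℝ := 2 * n * B with hC
  have hC0 : 0 ≤ C := by positivity
  have hBC : B ≤ C := by nlinarith
  set f : (X → ℝ) × (X → ℝ) → ℝ := fun p => ∑ x, p.1 x + ∑ x, p.2 x with hf
  have hfc : Continuous f := by
    apply Continuous.add
    · exact continuous_finset_sum _ fun x _ => (continuous_apply x).comp continuous_fst
    · exact continuous_finset_sum _ fun x _ => (continuous_apply x).comp continuous_snd
  set Feas : Set ((X → ℝ) × (X → ℝ)) := {p | ∀ x y, W x y ≤ p.1 x + p.2 y} with hFeas
  set K : Set ((X → ℝ) × (X → ℝ)) :=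
    Feas ∩ {p | ∀ x, p.1 x ∈ Set.Icc 0 C ∧ p.2 x ∈ Set.Icc (-B) C} with hKdef
  have hFeasClosed : IsClosed Feas := by
    have h : Feas = ⋂ (x : X), ⋂ (y : X), {p : (X → ℝ) × (X → ℝ) | W x y ≤ p.1 x + p.2 y} := by
      ext p; simp [hFeas]
    rw [h]
    refine isClosed_iInter fun x => isClosed_iInter fun y => ?_
    exact isClosed_le continuous_const
      (((continuous_apply x).comp continuous_fst).add ((continuous_apply y).comp continuous_snd))
  have hKclosed : IsClosed K := by
    apply hFeasClosed.inter
    have h : {p : (X → ℝ) × (X → ℝ) | ∀ x, p.1 x ∈ Set.Icc 0 C ∧ p.2 x ∈ Set.Icc (-B) C}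
        = ⋂ (x : X), ({p : (X → ℝ) × (X → ℝ) | p.1 x ∈ Set.Icc 0 C}
          ∩ {p | p.2 x ∈ Set.Icc (-B) C}) := by
      ext p; simp [Set.mem_iInter, forall_and]
    rw [h]
    refine isClosed_iInter fun x => IsClosed.inter ?_ ?_
    · exact IsClosed.preimage ((continuous_apply x).comp continuous_fst) isClosed_Icc
    · exact IsClosed.preimage ((continuous_apply x).comp continuous_snd) isClosed_Icc
  have hbig : IsCompact ((Set.univ.pi fun _ : X => Set.Icc (0:ℝ) C) ×ˢ
      (Set.univ.pi fun _ : X => Set.Icc (-B) C)) :=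
    (isCompact_univ_pi fun _ => isCompact_Icc).prod (isCompact_univ_pi fun _ => isCompact_Icc)
  have hKcompact : IsCompact K := by
    apply IsCompact.of_isClosed_subset hbig hKclosed
    rintro p ⟨-, hbox⟩
    exact ⟨fun x _ => (hbox x).1, fun x _ => (hbox x).2⟩
  have hp0 : ((fun _ => B, fun _ => 0) : (X → ℝ) × (X → ℝ)) ∈ K := by
    refine ⟨fun x y => by simpa using (le_trans (le_abs_self _) (hWB x y)), fun x => ?_⟩
    exact ⟨⟨hB0, hBC⟩, ⟨by simpa using neg_nonpos.mpr hB0, hC0⟩⟩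
  have hfp0 : f ((fun _ => B, fun _ => 0) : (X → ℝ) × (X → ℝ)) = n * B := by
    simp [hf, Finset.sum_const, Finset.card_univ, hn, mul_comm, nsmul_eq_mul]
  obtain ⟨p, hpK, hpmin⟩ := hKcompact.exists_isMinOn ⟨_, hp0⟩ hfc.continuousOn
  refine ⟨p.1, p.2, hpK.1, ?_⟩
  intro u' v' hfeas'
  by_contra hlt
  push_neg at hlt
  -- normalize (u', v')
  set c : ℝ := Finset.univ.inf' Finset.univ_nonempty u' with hc
  obtain ⟨x0, -, hx0⟩ := Finset.exists_mem_eq_inf' Finset.univ_nonempty u'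
  set q : (X → ℝ) × (X → ℝ) := (fun x => u' x - c, fun y => v' y + c) with hq
  have hqfeas : ∀ x y, W x y ≤ q.1 x + q.2 y := by
    intro x y
    have := hfeas' x y
    simp only [hq]
    linarith
  have hqsum : f q = ∑ x, u' x + ∑ x, v' x := by
    simp only [hf, hq, Finset.sum_sub_distrib, Finset.sum_add_distrib, Finset.sum_const,
      Finset.card_univ, nsmul_eq_mul]
    ring
  have hq1nn : ∀ x, 0 ≤ q.1 x := by
    intro x
    have : c ≤ u' x := Finset.inf'_le u' (Finset.mem_univ x)
    simp only [hq]; linarith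
  have hq2lb : ∀ y, -B ≤ q.2 y := by
    intro y
    have h1 := hfeas' x0 y
    have h2 : -B ≤ W x0 y := neg_le_of_abs_le (hWB x0 y)
    simp only [hq]
    rw [hc, hx0] at *
    linarith
  have hfp : f p = ∑ x, p.1 x + ∑ x, p.2 x := rfl
  have hfple : f p ≤ n * B := by
    have h := isMinOn_iff.mp hpmin _ hp0
    rw [hfp0] at h
    exact h
  have hfqlt : f q < n * B := by rw [hqsum]; linarith [hfp ▸ hfple]
  have hsum1lb : (0:ℝ) ≤ ∑ x, q.1 x := Finset.sum_nonneg fun x _ => hq1nn x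
  have hsum2lb : -(n * B) ≤ ∑ x, q.2 x := by
    have h := Finset.sum_le_sum (fun y (_ : y ∈ Finset.univ) => hq2lb y)
    rw [Finset.sum_const, Finset.card_univ, nsmul_eq_mul] at h
    calc -(n * B) = (Fintype.card X : ℝ) * (-B) := by rw [← hn]; ring
      _ ≤ ∑ x, q.2 x := h
  have hsplit : f q = ∑ x, q.1 x + ∑ x, q.2 x := rfl
  have hsum1ub : ∑ x, q.1 x ≤ C := by rw [hC]; linarith
  have hsum2ub : ∑ x, q.2 x ≤ n * B := by linarith
  have hq1ub : ∀ x, q.1 x ≤ C := by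
    intro x
    calc q.1 x ≤ ∑ x, q.1 x :=
          Finset.single_le_sum (fun z _ => hq1nn z) (Finset.mem_univ x)
      _ ≤ C := hsum1ub
  have hq2ub : ∀ y, q.2 y ≤ C := by
    intro y
    have herase : ∑ z ∈ Finset.univ.erase y, q.2 z + q.2 y = ∑ x, q.2 x :=
      Finset.sum_erase_add _ _ (Finset.mem_univ y)
    have hcard : ((Finset.univ.erase y).card : ℝ) ≤ n := by
      rw [hn]
      exact_mod_cast Finset.card_le_card (Finset.erase_subset _ _)
    have h := Finset.sum_le_sum (fun z (_ : z ∈ Finset.univ.erase y) => hq2lb z)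
    rw [Finset.sum_const, nsmul_eq_mul] at h
    have h2 : -(n * B) ≤ ∑ z ∈ Finset.univ.erase y, q.2 z := by nlinarith
    rw [hC]; linarith
  have hqK : q ∈ K := ⟨hqfeas, fun x => ⟨⟨hq1nn x, hq1ub x⟩, ⟨hq2lb x, hq2ub x⟩⟩⟩
  have hfin := isMinOn_iff.mp hpmin _ hqK
  rw [hqsum, hfp] at hfin
  linarith

end duality

section dual2
variable {X : Type*} [Fintype X] [Nonempty X]

lemma perm_duality (W : X → X → ℝ) :
    ∃ (u v : X → ℝ) (σ : Equiv.Perm X), (∀ x y, W x y ≤ u x + v y) ∧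
      ∑ x, u x + ∑ x, v x = ∑ x, W x (σ x) := by
  obtain ⟨u, v, hfeas, hopt⟩ := exists_min_dual W
  set r : X → Finset X := fun x => Finset.univ.filter (fun y => u x + v y ≤ W x y) with hr
  have hall : ∀ S : Finset X, S.card ≤ (S.biUnion r).card := by
    by_contra hno
    push_neg at hno
    obtain ⟨S, hS⟩ := hno
    set N : Finset X := S.biUnion r with hN
    have hSne : S.Nonempty := Finset.card_pos.mp (lt_of_le_of_lt (Nat.zero_le _) hS)
    have hNne : (Finset.univ \ N).Nonempty := by
      rw [Finset.sdiff_nonempty]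
      intro hsub
      have : (Finset.univ : Finset X).card ≤ N.card := Finset.card_le_card hsub
      have hcards : S.card ≤ (Finset.univ : Finset X).card := Finset.card_le_univ S
      omega
    set P : Finset (X × X) := S ×ˢ (Finset.univ \ N) with hP
    have hPne : P.Nonempty := hSne.product hNne
    have hslack : ∀ e ∈ P, 0 < u e.1 + v e.2 - W e.1 e.2 := by
      rintro ⟨x, y⟩ he
      rw [hP, Finset.mem_product] at he
      obtain ⟨hx, hy⟩ := he
      rw [Finset.mem_sdiff] at hy
      have hyr : y ∉ r x := fun hyr => hy.2 (Finset.mem_biUnion.mpr ⟨x, hx, hyr⟩)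
      rw [hr] at hyr
      simp only [Finset.mem_filter, Finset.mem_univ, true_and, not_le] at hyr
      linarith
    set ε : ℝ := P.inf' hPne (fun e => u e.1 + v e.2 - W e.1 e.2) with hε
    have hε0 : 0 < ε := (Finset.lt_inf'_iff hPne).mpr hslack
    set u' : X → ℝ := fun x => u x - (if x ∈ S then ε else 0) with hu'
    set v' : X → ℝ := fun y => v y + (if y ∈ N then ε else 0) with hv'
    have hfeas' : ∀ x y, W x y ≤ u' x + v' y := by
      intro x y
      simp only [hu', hv']
      by_cases hx : x ∈ S
      · by_cases hy : y ∈ N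
        · have := hfeas x y; simp [hx, hy]; linarith
        · have hmem : (x, y) ∈ P := by
            rw [hP, Finset.mem_product, Finset.mem_sdiff]
            exact ⟨hx, Finset.mem_univ y, hy⟩
          have := Finset.inf'_le (fun e : X × X => u e.1 + v e.2 - W e.1 e.2) hmem
          simp only [hx, hy, if_true, if_false]
          rw [hε] at *
          linarith
      · have := hfeas x y
        by_cases hy : y ∈ N <;> simp [hx, hy] <;> linarith
    have hkey := hopt u' v' hfeas'
    have hsu : ∑ x, u' x = ∑ x, u x - S.card * ε := by
      simp only [hu', Finset.sum_sub_distrib]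
      congr 1
      rw [Finset.sum_ite_mem, Finset.univ_inter, Finset.sum_const, nsmul_eq_mul]
    have hsv : ∑ y, v' y = ∑ y, v y + N.card * ε := by
      simp only [hv', Finset.sum_add_distrib]
      congr 1
      rw [Finset.sum_ite_mem, Finset.univ_inter, Finset.sum_const, nsmul_eq_mul]
    rw [hsu, hsv] at hkey
    have hcast : (N.card : ℝ) < (S.card : ℝ) := by exact_mod_cast hS
    nlinarith
  obtain ⟨g, hginj, hgr⟩ := (Finset.all_card_le_biUnion_card_iff_exists_injective r).mp hall
  have hgbij : Function.Bijective g := Finite.injective_iff_bijective.mp hginj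
  set σ : Equiv.Perm X := Equiv.ofBijective g hgbij with hσ
  refine ⟨u, v, σ, hfeas, ?_⟩
  have hσx : ∀ x, σ x = g x := fun x => rfl
  have htight : ∀ x, W x (g x) = u x + v (g x) := by
    intro x
    have h1 := hgr x
    rw [hr] at h1
    simp only [Finset.mem_filter, Finset.mem_univ, true_and] at h1
    exact le_antisymm (hfeas x (g x)) h1
  calc ∑ x, u x + ∑ x, v x = ∑ x, u x + ∑ x, v (σ x) := by rw [Equiv.sum_comp σ v]
    _ = ∑ x, (u x + v (σ x)) := Finset.sum_add_distrib.symm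
    _ = ∑ x, W x (σ x) := by
        apply Finset.sum_congr rfl
        intro x _
        rw [hσx, htight x]

end dual2

lemma exists_feasible_dual {U V : Type*} [Fintype U] [Fintype V]
    (E : Finset (U × V)) (w : U × V → ℝ) (hw : ∀ e ∈ E, 0 < w e) :
    ∃ (u' : U → ℝ) (v' : V → ℝ), (∀ i, 0 ≤ u' i) ∧ (∀ j, 0 ≤ v' j) ∧
      (∀ e ∈ E, w e ≤ u' e.1 + v' e.2) ∧
      ∑ i : U, u' i + ∑ j : V, v' j ≤ assignWorth E w Finset.univ Finset.univ := by
  rcases isEmpty_or_nonempty (U ⊕ V) with hE | hX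
  · have hU : IsEmpty U := (isEmpty_sum.mp hE).1
    have hV : IsEmpty V := (isEmpty_sum.mp hE).2
    refine ⟨fun _ => 0, fun _ => 0, fun i => le_refl _, fun j => le_refl _, ?_, ?_⟩
    · intro e _; exact (hU.false e.1).elim
    · simpa using assignWorth_nonneg (E := E) (w := w) (Su := Finset.univ) (Sv := Finset.univ)
  · set X := U ⊕ V
    set W : X → X → ℝ := fun x y => match x, y with
      | Sum.inl i, Sum.inr j => if (i, j) ∈ E then w (i, j) else 0
      | _, _ => 0 with hW
    have hWa : ∀ i j, W (Sum.inl i) (Sum.inr j) = if (i, j) ∈ E then w (i, j) else 0 :=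
      fun _ _ => rfl
    have hWb : ∀ (i : U) (x : X), W x (Sum.inl i) = 0 := by rintro i (x | x) <;> rfl
    have hWc : ∀ (j : V) (x : X), W (Sum.inr j) x = 0 := by rintro j (x | x) <;> rfl
    have hW0 : ∀ x y, 0 ≤ W x y := by
      rintro (i | j) (i' | j')
      · exact le_of_eq (hWb i' (Sum.inl i)).symm
      · rw [hWa]
        split_ifs with h
        · exact (hw _ h).le
        · exact le_refl 0
      · exact le_of_eq (hWc j (Sum.inl i')).symm
      · exact le_of_eq (hWc j (Sum.inr j')).symm
    obtain ⟨u₀, v₀, σ, hfeas₀, hsum₀⟩ := perm_duality W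
    -- the permutation value is a matching value
    have hperm_le : ∑ x, W x (σ x) ≤ assignWorth E w Finset.univ Finset.univ := by
      set M : Finset (U × V) := E.filter (fun e => σ (Sum.inl e.1) = Sum.inr e.2) with hM
      have hMmem : ∀ e ∈ M, e ∈ E ∧ σ (Sum.inl e.1) = Sum.inr e.2 := by
        intro e he; rw [hM, Finset.mem_filter] at he; exact he
      have hMeq : ∀ e ∈ M, ∀ f ∈ M, e.1 = f.1 → e = f := by
        intro e he f hf h
        have h1 := (hMmem e he).2
        have h2 := (hMmem f hf).2
        rw [h] at h1
        rw [h2] at h1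
        exact Prod.ext h (Sum.inr.inj h1).symm
      have hMatch : IsBipMatching E M := by
        refine ⟨Finset.filter_subset _ _, ?_⟩
        intro e he f hf hne
        constructor
        · exact fun h => hne (hMeq e he f hf h)
        · intro h
          have h1 := (hMmem e he).2
          have h2 := (hMmem f hf).2
          rw [h] at h1
          rw [← h1] at h2
          exact hne (hMeq e he f hf (Sum.inl.inj (σ.injective h2.symm)))
      have hval : ∑ x, W x (σ x) = ∑ e ∈ M, w e := by
        set A : Finset X := M.image (fun e => (Sum.inl e.1 : X)) with hA
        have hAsum : ∑ x ∈ A, W x (σ x) = ∑ e ∈ M, W (Sum.inl e.1) (σ (Sum.inl e.1)) := by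
          apply Finset.sum_image
          intro e he f hf h
          exact hMeq e he f hf (Sum.inl.inj h)
        have hterm : ∀ e ∈ M, W (Sum.inl e.1) (σ (Sum.inl e.1)) = w e := by
          intro e he
          rw [(hMmem e he).2, hWa, Prod.mk.eta, if_pos (hMmem e he).1]
        rw [← Finset.sum_subset (Finset.subset_univ A), hAsum]
        · exact Finset.sum_congr rfl hterm
        · rintro (i | j) - hx
          · rcases hσ : σ (Sum.inl i) with i' | j'
            · exact hWb i' (Sum.inl i)
            · rw [hWa]
              split_ifs with hij
              · exfalso
                apply hx
                rw [hA, Finset.mem_image]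
                refine ⟨(i, j'), ?_, rfl⟩
                rw [hM, Finset.mem_filter]
                exact ⟨hij, hσ⟩
              · rfl
          · exact hWc j (σ (Sum.inr j))
      rw [hval]
      exact le_assignWorth ⟨M, hMatch, fun e _ => ⟨Finset.mem_univ _, Finset.mem_univ _⟩, rfl⟩
    -- shift to nonnegative
    set m : ℝ := Finset.univ.inf' Finset.univ_nonempty v₀ with hm
    obtain ⟨ys, -, hys⟩ := Finset.exists_mem_eq_inf' (Finset.univ_nonempty (α := X)) v₀
    refine ⟨fun i => u₀ (Sum.inl i) + m, fun j => v₀ (Sum.inr j) - m, ?_, ?_, ?_, ?_⟩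
    · intro i
      show 0 ≤ u₀ (Sum.inl i) + m
      have h1 := hfeas₀ (Sum.inl i) ys
      have h2 := hW0 (Sum.inl i) ys
      rw [hm, hys]
      linarith
    · intro j
      show 0 ≤ v₀ (Sum.inr j) - m
      have := Finset.inf'_le v₀ (Finset.mem_univ (Sum.inr j : X))
      rw [hm]
      linarith
    · intro e he
      show w e ≤ (u₀ (Sum.inl e.1) + m) + (v₀ (Sum.inr e.2) - m)
      have h1 := hfeas₀ (Sum.inl e.1) (Sum.inr e.2)
      rw [hWa, Prod.mk.eta, if_pos he] at h1
      linarith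
    · have hmain : ∑ i : U, (u₀ (Sum.inl i) + m) + ∑ j : V, (v₀ (Sum.inr j) - m)
          ≤ ∑ x : X, (u₀ x + m) + ∑ x : X, (v₀ x - m) := by
        rw [Fintype.sum_sum_type (f := fun x : X => u₀ x + m),
          Fintype.sum_sum_type (f := fun x : X => v₀ x - m)]
        have h1 : (0:ℝ) ≤ ∑ j : V, (u₀ (Sum.inr j) + m) := by
          apply Finset.sum_nonneg
          intro j _
          have ha := hfeas₀ (Sum.inr j) ys
          have hb := hW0 (Sum.inr j) ys
          rw [hm, hys]
          linarith
        have h2 : (0:ℝ) ≤ ∑ i : U, (v₀ (Sum.inl i) - m) := by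
          apply Finset.sum_nonneg
          intro i _
          have := Finset.inf'_le v₀ (Finset.mem_univ (Sum.inl i : X))
          rw [hm]
          linarith
        linarith
      have hshift : ∑ x : X, (u₀ x + m) + ∑ x : X, (v₀ x - m) = ∑ x : X, u₀ x + ∑ x : X, v₀ x := by
        simp only [Finset.sum_add_distrib, Finset.sum_sub_distrib, Finset.sum_const,
          nsmul_eq_mul]
        ring
      calc ∑ i : U, (u₀ (Sum.inl i) + m) + ∑ j : V, (v₀ (Sum.inr j) - m)
          ≤ ∑ x : X, (u₀ x + m) + ∑ x : X, (v₀ x - m) := hmain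
        _ = ∑ x : X, u₀ x + ∑ x : X, v₀ x := hshift
        _ = ∑ x, W x (σ x) := hsum₀
        _ ≤ assignWorth E w Finset.univ Finset.univ := hperm_le


theorem shapley_shubik
    {U V : Type*} [Fintype U] [Fintype V]
    (E : Finset (U × V)) (w : U × V → ℝ) (hw : ∀ e ∈ E, 0 < w e)
    (u : U → ℝ) (v : V → ℝ) (hu : ∀ i, 0 ≤ u i) (hv : ∀ j, 0 ≤ v j) :
    -- `(u, v)` is in the core of the assignment game
    ((∑ i : U, u i + ∑ j : V, v j = assignWorth E w Finset.univ Finset.univ) ∧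
      ∀ (Su : Finset U) (Sv : Finset V),
        assignWorth E w Su Sv ≤ ∑ i ∈ Su, u i + ∑ j ∈ Sv, v j)
    ↔
    -- `(u, v)` is an optimal solution of the dual LP
    ((∀ e ∈ E, w e ≤ u e.1 + v e.2) ∧
      ∀ (u' : U → ℝ) (v' : V → ℝ), (∀ i, 0 ≤ u' i) → (∀ j, 0 ≤ v' j) →
        (∀ e ∈ E, w e ≤ u' e.1 + v' e.2) →
        ∑ i : U, u i + ∑ j : V, v j ≤ ∑ i : U, u' i + ∑ j : V, v' j) := by
  constructor
  · rintro ⟨heff, hstab⟩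
    constructor
    · intro e he
      have hmem : w e ∈ worthSet E w {e.1} {e.2} := by
        refine ⟨{e}, ⟨Finset.singleton_subset_iff.mpr he, ?_⟩, ?_, ?_⟩
        · intro a ha b hb hne
          rw [Finset.mem_singleton] at ha hb
          exact absurd (ha.trans hb.symm) hne
        · intro a ha
          rw [Finset.mem_singleton] at ha
          subst ha
          exact ⟨Finset.mem_singleton_self _, Finset.mem_singleton_self _⟩
        · rw [Finset.sum_singleton]
      have h1 := le_assignWorth hmem
      have h2 := hstab {e.1} {e.2}
      rw [Finset.sum_singleton, Finset.sum_singleton] at h2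
      linarith
    · intro u' v' hu' hv' hfeas'
      rw [heff]
      apply assignWorth_le
      rintro x ⟨M, hM, hMe, rfl⟩
      exact matching_sum_le hM hu' hv' (fun e _ => ⟨Finset.mem_univ _, Finset.mem_univ _⟩) hfeas'
  · rintro ⟨hfeas, hopt⟩
    have hstab : ∀ (Su : Finset U) (Sv : Finset V),
        assignWorth E w Su Sv ≤ ∑ i ∈ Su, u i + ∑ j ∈ Sv, v j := by
      intro Su Sv
      apply assignWorth_le
      rintro x ⟨M, hM, hMe, rfl⟩
      exact matching_sum_le hM hu hv hMe hfeas
    refine ⟨?_, hstab⟩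
    have h1 := hstab Finset.univ Finset.univ
    obtain ⟨u', v', hu', hv', hf', hle⟩ := exists_feasible_dual E w hw
    have h2 := (hopt u' v' hu' hv' hf').trans hle
    linarith
end

section
/- (Birkhoff) Let G = (U, V, E) be a finite bipartite graph and let P ⊆ ℝ^E be the polytope of all x : E → ℝ with x ≥ 0, Σ_{j : (i,j) ∈ E} x(i,j) ≤ 1 for every i ∈ U, and Σ_{i : (i,j) ∈ E} x(i,j) ≤ 1 for every j ∈ V. Then the extreme points of P are exactly the 0/1 indicator vectors of matchings of G. -/
/-!
If an extreme point `x` had a fractional coordinate, let `F` be the set of fractional edges. A tight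
vertex cannot meet exactly one edge of `F`, so every tight vertex meeting `F` meets it at least
twice. Counting dimensions, some nonzero `d` supported on `F` has zero sum at all these vertices:
otherwise `#F` is at most the number of such vertices, which forces every edge of `F` to join two
of them, and then the constraints are dependent because the sums over both sides of the bipartition
agree. Then `x ± t • d` stay in the polytope for small `t`, contradicting extremality. Conversely,
a `0`/`1` point of the polytope is a vertex of the unit cube containing it.
-/

open scoped Classical

open Finset Filter Topology

theorem eventually_add_mul_le {a b c : ℝ} (hab : a ≤ b) (hc : a = b → c = 0) :
    ∀ᶠ t in 𝓝 0, a + t * c ≤ b := by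
  rcases hab.lt_or_eq with hlt | rfl
  · have : Tendsto (fun t : ℝ => a + t * c) (𝓝 0) (𝓝 a) := by
      simpa using ((continuous_mul_const c).tendsto 0).const_add a
    exact (this.eventually (eventually_lt_nhds hlt)).mono fun _ => le_of_lt
  · simp [hc rfl]

theorem eq_zero_of_mem_extremePoints_of_eventually_add_smul_mem {E : Type*} [AddCommGroup E]
    [Module ℝ E] {S : Set E} {x d : E} (hx : x ∈ S.extremePoints ℝ)
    (h : ∀ᶠ t in 𝓝 (0 : ℝ), x + t • d ∈ S) : d = 0 := by
  have hneg : ∀ᶠ t in 𝓝 (0 : ℝ), x + (-t) • d ∈ S :=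
    (continuous_neg.tendsto' 0 0 neg_zero).eventually h
  obtain ⟨t, ⟨hplus, hminus⟩, ht⟩ :=
    (((h.and hneg).filter_mono nhdsWithin_le_nhds).and
      (self_mem_nhdsWithin (s := Set.Ioi 0))).exists
  have hseg : x ∈ openSegment ℝ (x + t • d) (x + (-t) • d) :=
    ⟨1 / 2, 1 / 2, by norm_num, by norm_num, by norm_num, by module⟩
  exact (smul_eq_zero.1 (add_eq_left.1 (hx.2 hplus hminus hseg))).resolve_left (ne_of_gt ht)

theorem mem_extremePoints_of_forall_eq_zero_or_eq_one {ι : Type*} {S : Set (ι → ℝ)}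
    (hS : S ⊆ Set.univ.pi fun _ => Set.Icc 0 1) {x : ι → ℝ} (hx : x ∈ S)
    (h01 : ∀ i, x i = 0 ∨ x i = 1) : x ∈ S.extremePoints ℝ :=
  inter_extremePoints_subset_extremePoints_of_subset hS
    ⟨hx, by rw [extremePoints_pi]; simpa [Set.extremePoints_Icc] using h01⟩

theorem mul_card_le_card_filter_mem {ι α : Type*} [Fintype ι] (p : ι → α) (A : Finset α)
    {n : ℕ} (h : ∀ a ∈ A, n ≤ #{i | p i = a}) : n * #A ≤ #{i | p i ∈ A} := by
  refine mul_card_image_le_card_of_maps_to (fun i hi => (mem_filter.1 hi).2) n fun a ha => ?_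
  rw [filter_filter]
  convert h a ha using 2
  ext i
  simp only [mem_filter, mem_univ, true_and]
  exact ⟨And.right, fun hi => ⟨hi ▸ ha, hi⟩⟩

theorem sum_filter_dite_eq_sum_subtype {ι M : Type*} [Fintype ι] [AddCommMonoid M]
    {P : ι → Prop} [DecidablePred P] (r : ι → Prop) [DecidablePred r] (g : Subtype P → M) :
    ∑ e with r e, (if h : P e then g ⟨e, h⟩ else 0) = ∑ f : Subtype P with r f.1, g f := by
  rw [sum_filter, sum_filter, ← Fintype.sum_subtype_add_sum_subtype P]
  have hout : ∑ e : {e // ¬P e}, (if r e then (if h : P e then g ⟨e, h⟩ else 0) else 0) = 0 :=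
    Fintype.sum_eq_zero _ fun e => by simp [e.2]
  rw [hout, add_zero]
  exact Fintype.sum_congr _ _ fun e => by simp [e.2]

section FiberSums

variable {ι α β : Type*} [Fintype ι]

noncomputable def fiberSums (p : ι → α) (A : Finset α) : (ι → ℝ) →ₗ[ℝ] A → ℝ :=
  LinearMap.pi fun a => ∑ i with p i = a, LinearMap.proj i

@[simp]
theorem fiberSums_apply (p : ι → α) (A : Finset α) (d : ι → ℝ) (a : A) :
    fiberSums p A d a = ∑ i with p i = a, d i := by
  simp [fiberSums]

theorem sum_eq_sum_fiberSums {p : ι → α} {A : Finset α} (hA : ∀ i, p i ∈ A) (d : ι → ℝ) :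
    ∑ i, d i = ∑ a, fiberSums p A d a := by
  simp only [fiberSums_apply]
  rw [sum_coe_sort A (fun a => ∑ i with p i = a, d i), sum_fiberwise_of_maps_to fun i _ => hA i]

theorem not_injective_fiberSums_prod [Nonempty ι] {p : ι → α} {q : ι → β}
    {A : Finset α} {B : Finset β} (hA : ∀ a ∈ A, 2 ≤ #{i | p i = a})
    (hB : ∀ b ∈ B, 2 ≤ #{i | q i = b}) :
    ¬Function.Injective ((fiberSums p A).prod (fiberSums q B)) := by
  intro hinj
  have hdim : Fintype.card ι ≤ #A + #B := by
    simpa using LinearMap.finrank_le_finrank_of_injective hinj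
  have hcovA := mul_card_le_card_filter_mem p A hA
  have hcovB := mul_card_le_card_filter_mem q B hB
  have hleA := card_filter_le (univ : Finset ι) (fun i => p i ∈ A)
  have hleB := card_filter_le (univ : Finset ι) (fun i => q i ∈ B)
  rw [card_univ] at hleA hleB
  -- `2 * #A ≤ #{i | p i ∈ A} ≤ card ι ≤ #A + #B` and symmetrically for `B`: all are equalities
  have hpA : ∀ i, p i ∈ A := fun i =>
    (card_filter_eq_iff (p := fun i => p i ∈ A)).1 (by rw [card_univ]; omega) i (mem_univ i)
  have hqB : ∀ i, q i ∈ B := fun i =>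
    (card_filter_eq_iff (p := fun i => q i ∈ B)).1 (by rw [card_univ]; omega) i (mem_univ i)
  have hsurj := (LinearMap.injective_iff_surjective_of_finrank_eq_finrank
    (by simp; omega)).1 hinj
  obtain ⟨i₀⟩ := ‹Nonempty ι›
  obtain ⟨d, hd⟩ := hsurj (Pi.single ⟨p i₀, hpA i₀⟩ 1, 0)
  -- `∑ i, d i` is both the sum of the `A`-coordinates and of the `B`-coordinates of the image
  have h1 : ∑ i, d i = 1 := by
    rw [sum_eq_sum_fiberSums hpA, show fiberSums p A d = _ from congr_arg Prod.fst hd]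
    simp
  have h0 : ∑ i, d i = 0 := by
    rw [sum_eq_sum_fiberSums hqB, show fiberSums q B d = _ from congr_arg Prod.snd hd]
    simp
  linarith

theorem exists_ne_zero_fiber_sums_eq_zero [Nonempty ι] (p : ι → α) (q : ι → β)
    (P : α → Prop) (Q : β → Prop)
    (hP : ∀ a, P a → 2 ≤ #{i | p i = a}) (hQ : ∀ b, Q b → 2 ≤ #{i | q i = b}) :
    ∃ d : ι → ℝ, d ≠ 0 ∧ (∀ a, P a → ∑ i with p i = a, d i = 0) ∧
      ∀ b, Q b → ∑ i with q i = b, d i = 0 := by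
  have hA : ∀ a, a ∈ {a ∈ univ.image p | P a} ↔ P a := fun a =>
    ⟨fun ha => (mem_filter.1 ha).2, fun ha => mem_filter.2
      ⟨mem_image.2 (filter_nonempty_iff.1 (card_pos.1 (by linarith [hP a ha]))), ha⟩⟩
  have hB : ∀ b, b ∈ {b ∈ univ.image q | Q b} ↔ Q b := fun b =>
    ⟨fun hb => (mem_filter.1 hb).2, fun hb => mem_filter.2
      ⟨mem_image.2 (filter_nonempty_iff.1 (card_pos.1 (by linarith [hQ b hb]))), hb⟩⟩
  have hker := not_injective_fiberSums_prod (fun a ha => hP a ((hA a).1 ha))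
    fun b hb => hQ b ((hB b).1 hb)
  rw [injective_iff_map_eq_zero] at hker
  push Not at hker
  obtain ⟨d, hd, hd0⟩ := hker
  rw [LinearMap.prod_apply, Prod.mk_eq_zero] at hd
  exact ⟨d, hd0, fun a ha => by simpa using congr_fun hd.1 ⟨a, (hA a).2 ha⟩,
    fun b hb => by simpa using congr_fun hd.2 ⟨b, (hB b).2 hb⟩⟩

end FiberSums

section FractionalMatching

variable {ι U V : Type*} [Fintype ι]

def fractionalMatchingPolytope (p : ι → U) (q : ι → V) : Set (ι → ℝ) :=
  {x | (∀ e, 0 ≤ x e) ∧ (∀ u, ∑ e with p e = u, x e ≤ 1) ∧ ∀ v, ∑ e with q e = v, x e ≤ 1}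

abbrev FractionalEdge (x : ι → ℝ) : Type _ := {e // x e ∈ Set.Ioo 0 1}

variable {p : ι → U} {q : ι → V} {x : ι → ℝ}

theorem le_one_of_fiber_sums_le_one (hx0 : ∀ e, 0 ≤ x e)
    (hxp : ∀ u, ∑ e with p e = u, x e ≤ 1) (e : ι) : x e ≤ 1 :=
  (single_le_sum (fun f _ => hx0 f) (by simp : e ∈ ({f | p f = p e} : Finset ι))).trans (hxp _)

theorem add_le_one_of_fiber_sums_le_one (hx0 : ∀ e, 0 ≤ x e)
    (hxp : ∀ u, ∑ e with p e = u, x e ≤ 1) {e f : ι} (hef : e ≠ f) (h : p e = p f) :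
    x e + x f ≤ 1 :=
  calc x e + x f = ∑ g ∈ {e, f}, x g := (sum_pair hef).symm
    _ ≤ ∑ g with p g = p e, x g :=
      sum_le_sum_of_subset_of_nonneg (by simp [insert_subset_iff, h]) fun g _ _ => hx0 g
    _ ≤ 1 := hxp _

theorem card_fractional_fiber_ne_one (hx0 : ∀ e, 0 ≤ x e)
    (hxp : ∀ u, ∑ e with p e = u, x e ≤ 1) {u : U} (hu : ∑ e with p e = u, x e = 1) :
    #{f : FractionalEdge x | p f = u} ≠ 1 := by
  intro h
  obtain ⟨f, hf⟩ := card_eq_one.1 h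
  have hfu : p f = u := by simpa using hf.ge (mem_singleton_self f)
  have hothers : ∀ e ∈ ({e | p e = u} : Finset ι), e ≠ f → x e = 0 := by
    intro e he hef
    have hnotfrac : x e ∉ Set.Ioo 0 1 := fun hfrac =>
      hef (congr_arg Subtype.val (mem_singleton.1 (hf.le (by simpa using he) : ⟨e, hfrac⟩ ∈ _)))
    by_contra hne
    have hpair := add_le_one_of_fiber_sums_le_one hx0 hxp hef (by simpa [hfu] using he)
    have hf0 : 0 < x f := f.2.1
    exact hnotfrac ⟨lt_of_le_of_ne (hx0 e) (Ne.symm hne), by linarith⟩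
  rw [sum_eq_single_of_mem f.1 (by simpa using hfu) hothers] at hu
  exact f.2.2.ne hu

theorem sum_fiber_dite_eq_zero (hx0 : ∀ e, 0 ≤ x e) (hxp : ∀ u, ∑ e with p e = u, x e ≤ 1)
    (d : FractionalEdge x → ℝ)
    (hd : ∀ u, ∑ e with p e = u, x e = 1 → 2 ≤ #{f : FractionalEdge x | p f = u} →
      ∑ f : FractionalEdge x with p f.1 = u, d f = 0)
    {u : U} (hu : ∑ e with p e = u, x e = 1) :
    ∑ e with p e = u, (if h : x e ∈ Set.Ioo 0 1 then d ⟨e, h⟩ else 0) = 0 := by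
  rw [sum_filter_dite_eq_sum_subtype]
  obtain h | h : 2 ≤ #{f : FractionalEdge x | p f = u} ∨
      #{f : FractionalEdge x | p f = u} = 0 := by
    have := card_fractional_fiber_ne_one hx0 hxp hu
    omega
  · exact hd u hu h
  · rw [card_eq_zero.1 h, sum_empty]

theorem exists_ne_zero_feasible_direction (hx : x ∈ fractionalMatchingPolytope p q) {e₀ : ι}
    (he₀ : x e₀ ∈ Set.Ioo 0 1) :
    ∃ d : ι → ℝ, d ≠ 0 ∧ (∀ e, x e = 0 → d e = 0) ∧
      (∀ u, ∑ e with p e = u, x e = 1 → ∑ e with p e = u, d e = 0) ∧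
      ∀ v, ∑ e with q e = v, x e = 1 → ∑ e with q e = v, d e = 0 := by
  obtain ⟨hx0, hxp, hxq⟩ := hx
  have : Nonempty (FractionalEdge x) := ⟨⟨e₀, he₀⟩⟩
  obtain ⟨d, hd, hdp, hdq⟩ := exists_ne_zero_fiber_sums_eq_zero
    (fun f : FractionalEdge x => p f) (fun f : FractionalEdge x => q f)
    (fun u => ∑ e with p e = u, x e = 1 ∧ 2 ≤ #{f : FractionalEdge x | p f = u})
    (fun v => ∑ e with q e = v, x e = 1 ∧ 2 ≤ #{f : FractionalEdge x | q f = v})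
    (fun _ h => h.2) (fun _ h => h.2)
  refine ⟨fun e => if h : x e ∈ Set.Ioo 0 1 then d ⟨e, h⟩ else 0, fun h0 => hd ?_,
    fun e he => by simp [he], fun u => sum_fiber_dite_eq_zero hx0 hxp d
      (fun w hw h2 => hdp w ⟨hw, h2⟩), fun v => sum_fiber_dite_eq_zero hx0 hxq d
      (fun w hw h2 => hdq w ⟨hw, h2⟩)⟩
  funext f
  simpa [f.2] using congr_fun h0 f

theorem eventually_nonneg_add_smul (hx0 : ∀ e, 0 ≤ x e) {d : ι → ℝ}
    (hd : ∀ e, x e = 0 → d e = 0) : ∀ᶠ t in 𝓝 (0 : ℝ), ∀ e, 0 ≤ (x + t • d) e :=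
  eventually_all.2 fun e =>
    (eventually_add_mul_le (c := -d e) (neg_nonpos.2 (hx0 e)) fun h => by
      simp [hd e (neg_eq_zero.1 h)]).mono fun t ht => by
        simp only [Pi.add_apply, Pi.smul_apply, smul_eq_mul]; linarith

theorem eventually_fiber_sums_add_smul_le_one (hxp : ∀ u, ∑ e with p e = u, x e ≤ 1)
    {d : ι → ℝ} (hd : ∀ u, ∑ e with p e = u, x e = 1 → ∑ e with p e = u, d e = 0) :
    ∀ᶠ t in 𝓝 (0 : ℝ), ∀ u, ∑ e with p e = u, (x + t • d) e ≤ 1 := by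
  have hedges : ∀ᶠ t in 𝓝 (0 : ℝ), ∀ e, ∑ g with p g = p e, (x + t • d) g ≤ 1 := by
    refine eventually_all.2 fun e => ?_
    simp only [Pi.add_apply, Pi.smul_apply, smul_eq_mul, sum_add_distrib, ← mul_sum]
    exact eventually_add_mul_le (hxp _) (hd _)
  -- `U` may be infinite, but the fibres over vertices without edges are empty
  refine hedges.mono fun t ht u => ?_
  by_cases hu : ∃ e, p e = u
  · obtain ⟨e, rfl⟩ := hu
    exact ht e
  · simp [not_exists.1 hu]

theorem eventually_add_smul_mem_fractionalMatchingPolytope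
    (hx : x ∈ fractionalMatchingPolytope p q) {d : ι → ℝ} (hd0 : ∀ e, x e = 0 → d e = 0)
    (hdp : ∀ u, ∑ e with p e = u, x e = 1 → ∑ e with p e = u, d e = 0)
    (hdq : ∀ v, ∑ e with q e = v, x e = 1 → ∑ e with q e = v, d e = 0) :
    ∀ᶠ t in 𝓝 (0 : ℝ), x + t • d ∈ fractionalMatchingPolytope p q :=
  (eventually_nonneg_add_smul hx.1 hd0).and
    ((eventually_fiber_sums_add_smul_le_one hx.2.1 hdp).and
      (eventually_fiber_sums_add_smul_le_one hx.2.2 hdq))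

theorem forall_eq_zero_or_eq_one_of_mem_extremePoints
    (hx : x ∈ (fractionalMatchingPolytope p q).extremePoints ℝ) (e : ι) :
    x e = 0 ∨ x e = 1 := by
  by_contra! h
  have he : x e ∈ Set.Ioo 0 1 := ⟨(hx.1.1 e).lt_of_ne' h.1,
    (le_one_of_fiber_sums_le_one hx.1.1 hx.1.2.1 e).lt_of_ne h.2⟩
  obtain ⟨d, hd, hd0, hdp, hdq⟩ := exists_ne_zero_feasible_direction hx.1 he
  exact hd (eq_zero_of_mem_extremePoints_of_eventually_add_smul_mem hx
    (eventually_add_smul_mem_fractionalMatchingPolytope hx.1 hd0 hdp hdq))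

theorem extremePoints_fractionalMatchingPolytope :
    (fractionalMatchingPolytope p q).extremePoints ℝ =
      {x ∈ fractionalMatchingPolytope p q | ∀ e, x e = 0 ∨ x e = 1} := by
  ext x
  refine ⟨fun hx => ⟨hx.1, forall_eq_zero_or_eq_one_of_mem_extremePoints hx⟩,
    fun ⟨hx, h01⟩ => mem_extremePoints_of_forall_eq_zero_or_eq_one ?_ hx h01⟩
  exact fun y hy e _ => ⟨hy.1 e, le_one_of_fiber_sums_le_one hy.1 hy.2.1 e⟩

theorem sum_fiber_ite_le_one (m : ι → Prop) [DecidablePred m]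
    (hm : ∀ e f, m e → m f → p e = p f → e = f) (u : U) :
    ∑ e with p e = u, (if m e then (1 : ℝ) else 0) ≤ 1 := by
  rw [sum_boole]
  exact_mod_cast card_le_one.2 fun e he f hf => by
    simp only [mem_filter] at he hf
    exact hm e f he.2 hf.2 (he.1.2.trans hf.1.2.symm)

end FractionalMatching

section Matching

variable {U V : Type*} {E M : Finset (U × V)}

theorem indicator_mem_fractionalMatchingPolytope (hM : IsBipMatching E M) :
    (fun e : {e // e ∈ E} => if e.1 ∈ M then (1 : ℝ) else 0) ∈
      fractionalMatchingPolytope (fun e : {e // e ∈ E} => e.1.1) (fun e => e.1.2) := by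
  refine ⟨fun e => by dsimp only; split_ifs <;> norm_num, sum_fiber_ite_le_one _ ?_,
    sum_fiber_ite_le_one _ ?_⟩
  all_goals
    intro e f he hf h
    by_contra hef
    have := hM.2 _ he _ hf fun h' => hef (Subtype.ext h')
    tauto

theorem exists_isBipMatching_of_forall_eq_zero_or_eq_one {x : {e // e ∈ E} → ℝ}
    (hx : x ∈ fractionalMatchingPolytope (fun e : {e // e ∈ E} => e.1.1) (fun e => e.1.2))
    (h01 : ∀ e, x e = 0 ∨ x e = 1) :
    ∃ M, IsBipMatching E M ∧ x = fun e => if e.1 ∈ M then (1 : ℝ) else 0 := by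
  obtain ⟨hx0, hxp, hxq⟩ := hx
  refine ⟨{a ∈ E | ∃ h : a ∈ E, x ⟨a, h⟩ = 1}, ⟨filter_subset _ _, ?_⟩, funext fun e => ?_⟩
  · simp only [mem_filter]
    rintro a ⟨-, ha, hxa⟩ b ⟨-, hb, hxb⟩ hab
    have hne : (⟨a, ha⟩ : {e // e ∈ E}) ≠ ⟨b, hb⟩ := fun h => hab (congr_arg Subtype.val h)
    constructor <;> intro h
    · linarith [add_le_one_of_fiber_sums_le_one hx0 hxp hne h]
    · linarith [add_le_one_of_fiber_sums_le_one hx0 hxq hne h]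
  · rcases h01 e with h | h <;> simp [h, e.2]

end Matching

theorem birkhoff_extreme_points_are_matchings_general
    {U V : Type*} (E : Finset (U × V)) :
    Set.extremePoints ℝ
      {x : {e : U × V // e ∈ E} → ℝ |
        (∀ e, 0 ≤ x e) ∧
        (∀ i : U, ∑ e ∈ Finset.univ.filter (fun e : {e : U × V // e ∈ E} => e.1.1 = i),
          x e ≤ 1) ∧
        (∀ j : V, ∑ e ∈ Finset.univ.filter (fun e : {e : U × V // e ∈ E} => e.1.2 = j),
          x e ≤ 1)}
    =
    {x : {e : U × V // e ∈ E} → ℝ | ∃ M : Finset (U × V), IsBipMatching E M ∧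
      x = fun e => if e.1 ∈ M then (1 : ℝ) else 0} := by
  change Set.extremePoints ℝ
    (fractionalMatchingPolytope (fun e : {e // e ∈ E} => e.1.1) (fun e => e.1.2)) = _
  rw [extremePoints_fractionalMatchingPolytope]
  ext x
  constructor
  · rintro ⟨hx, h01⟩
    exact exists_isBipMatching_of_forall_eq_zero_or_eq_one hx h01
  · rintro ⟨M, hM, rfl⟩
    exact ⟨indicator_mem_fractionalMatchingPolytope hM, fun e => by dsimp only; split_ifs <;> simp⟩

theorem birkhoff_extreme_points_are_matchings
    {U V : Type*} [Fintype U] [Fintype V] (E : Finset (U × V)) :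
    Set.extremePoints ℝ
      {x : {e : U × V // e ∈ E} → ℝ |
        (∀ e, 0 ≤ x e) ∧
        (∀ i : U, ∑ e ∈ Finset.univ.filter (fun e : {e : U × V // e ∈ E} => e.1.1 = i),
          x e ≤ 1) ∧
        (∀ j : V, ∑ e ∈ Finset.univ.filter (fun e : {e : U × V // e ∈ E} => e.1.2 = j),
          x e ≤ 1)}
    =
    {x : {e : U × V // e ∈ E} → ℝ | ∃ M : Finset (U × V), IsBipMatching E M ∧
      x = fun e => if e.1 ∈ M then (1 : ℝ) else 0} :=
  birkhoff_extreme_points_are_matchings_general E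
end

section
/- (LP duality for perfect graphs) Let G = (V,E) be a finite perfect graph with nonnegative real vertex weights w. Then there exists a nonnegative function y on the nonempty cliques of G with Σ_{Q : v ∈ Q} y_Q ≥ w(v) for every v ∈ V and Σ_Q y_Q = worth(G), where worth(G) is the maximum of Σ_{v ∈ S} w(v) over stable sets S of G. Consequently the minimum of Σ_Q y_Q over all such dual-feasible y equals worth(G). -/
open scoped Classical

/-!
For an integer weight `h`, perfection of `G` gives, by Lovász's replication argument, a colouring
of `G` with `h v` colours at each vertex `v` using only as many colours as the heaviest clique.
Such colourings yield, inside every vertex set `T`, a clique meeting all maximum stable sets of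
`G[T]`; removing it lowers the stability number, so `G[T]` is covered by `α(G[T])` cliques, and
replication again covers every integer weight `h` by as many cliques of `G` as the heaviest stable
set. For real `w`, covering `⌈d w⌉` and dividing by `d` gives dual solutions of cost at most
`worth(G) + |V| / d`, weak duality bounds every dual solution below by `worth(G)`, and compactness
of the (bounded part of the) dual feasible region turns this infimum into a minimum.
-/

open Finset SimpleGraph

section Combinatorics

variable {V : Type*}

noncomputable def coverCount (m : Multiset (Finset V)) (v : V) : ℕ :=
  m.countP (v ∈ ·)

@[simp]
lemma coverCount_zero : coverCount (0 : Multiset (Finset V)) = 0 := by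
  ext v; simp [coverCount]

@[simp]
lemma coverCount_cons (S : Finset V) (m : Multiset (Finset V)) :
    coverCount (S ::ₘ m) = coverCount m + coverCount {S} := by
  ext v; simp [coverCount, ← Multiset.cons_zero, Multiset.countP_cons]

lemma coverCount_singleton_apply (S : Finset V) (v : V) :
    coverCount {S} v = if v ∈ S then 1 else 0 := by
  simp [coverCount, ← Multiset.cons_zero, Multiset.countP_cons]

lemma sum_coverCount (m : Multiset (Finset V)) (A : Finset V) :
    ∑ v ∈ A, coverCount m v = (m.map fun S => #(A ∩ S)).sum := by
  induction m using Multiset.induction_on with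
  | empty => simp
  | cons S m ih =>
    simp [sum_add_distrib, ih, coverCount_singleton_apply, add_comm]

lemma sum_coverCount_singleton (S A : Finset V) : ∑ v ∈ A, coverCount {S} v = #(A ∩ S) := by
  simp [sum_coverCount]

lemma sum_add_coverCount_singleton (h : V → ℕ) (S A : Finset V) :
    ∑ v ∈ A, (h + coverCount {S}) v = ∑ v ∈ A, h v + #(A ∩ S) := by
  rw [← sum_coverCount_singleton, ← sum_add_distrib]; rfl

lemma SimpleGraph.IsClique.card_inter_le_one {H : SimpleGraph V} {Q S : Finset V}
    (hQ : H.IsClique (Q : Set V)) (hS : H.IsIndepSet (S : Set V)) : #(Q ∩ S) ≤ 1 :=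
  card_le_one.2 fun a ha b hb => by
    rw [mem_inter] at ha hb
    by_contra hab
    exact hS ha.2 hb.2 hab (hQ ha.1 hb.1 hab)

lemma inter_nonempty_of_card_le_sum_coverCount {H : SimpleGraph V} {m : Multiset (Finset V)}
    (hm : ∀ S ∈ m, H.IsIndepSet (S : Set V)) {Q S : Finset V} (hQ : H.IsClique (Q : Set V))
    (hcard : Multiset.card m ≤ ∑ v ∈ Q, coverCount m v) (hS : S ∈ m) : (Q ∩ S).Nonempty := by
  by_contra hQS
  rw [not_nonempty_iff_eq_empty] at hQS
  have hrest : ((m.erase S).map fun S' => #(Q ∩ S')).sum ≤ Multiset.card (m.erase S) := by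
    simpa using Multiset.sum_le_card_nsmul ((m.erase S).map fun S' => #(Q ∩ S')) 1 (by
      simpa using fun S' hS' => hQ.card_inter_le_one (hm S' (Multiset.mem_of_mem_erase hS')))
  rw [sum_coverCount, ← Multiset.cons_erase hS, Multiset.map_cons, Multiset.sum_cons, hQS,
    card_empty, Multiset.card_cons] at hcard
  omega

end Combinatorics

section WeightedColoring

variable {V : Type*} [Fintype V] {H : SimpleGraph V}

noncomputable def cliqueWeight (H : SimpleGraph V) (h : V → ℕ) : ℕ :=
  (univ.filter fun Q : Finset V => H.IsClique (Q : Set V)).sup fun Q => ∑ v ∈ Q, h v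

lemma sum_le_cliqueWeight {Q : Finset V} (hQ : H.IsClique (Q : Set V)) (h : V → ℕ) :
    ∑ v ∈ Q, h v ≤ cliqueWeight H h :=
  le_sup (f := fun Q => ∑ v ∈ Q, h v) (by simpa using hQ)

lemma exists_isClique_sum_eq_cliqueWeight (H : SimpleGraph V) (h : V → ℕ) :
    ∃ Q : Finset V, H.IsClique (Q : Set V) ∧ ∑ v ∈ Q, h v = cliqueWeight H h := by
  obtain ⟨Q, hQ, hQh⟩ := exists_mem_eq_sup (univ.filter fun Q : Finset V => H.IsClique (Q : Set V))
    ⟨∅, by simp⟩ fun Q => ∑ v ∈ Q, h v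
  exact ⟨Q, by simpa using hQ, hQh.symm⟩

lemma cliqueWeight_mono {h h' : V → ℕ} (hh' : h ≤ h') : cliqueWeight H h ≤ cliqueWeight H h' :=
  sup_mono_fun fun _ _ => sum_le_sum fun v _ => hh' v

/-- `m` is a colouring of the graph obtained from `H` by replacing each vertex `v` with a clique of
`h v` copies, with no more colours than its clique number. -/
def HasOptimalColoring (H : SimpleGraph V) (h : V → ℕ) : Prop :=
  ∃ m : Multiset (Finset V), (∀ S ∈ m, H.IsIndepSet (S : Set V)) ∧ coverCount m = h ∧
    Multiset.card m ≤ cliqueWeight H h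

lemma cliqueWeight_lt_cliqueWeight_add_coverCount {h : V → ℕ} {S : Finset V}
    (hS : ∀ Q : Finset V, H.IsClique (Q : Set V) →
      ∑ v ∈ Q, (h + coverCount {S}) v = cliqueWeight H (h + coverCount {S}) → (Q ∩ S).Nonempty) :
    cliqueWeight H h < cliqueWeight H (h + coverCount {S}) := by
  obtain ⟨Q, hQ, hQh⟩ := exists_isClique_sum_eq_cliqueWeight H h
  have hsum := sum_add_coverCount_singleton h S Q
  have hle := sum_le_cliqueWeight hQ (h + coverCount {S})
  rcases (Q ∩ S).eq_empty_or_nonempty with hQS | hQS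
  · have hne := mt (hS Q hQ) (not_nonempty_iff_eq_empty.2 hQS)
    rw [hQS, card_empty] at hsum
    omega
  · have := hQS.card_pos
    omega

lemma HasOptimalColoring.add_coverCount {h : V → ℕ} (hh : HasOptimalColoring H h) {S : Finset V}
    (hSind : H.IsIndepSet (S : Set V))
    (hS : ∀ Q : Finset V, H.IsClique (Q : Set V) →
      ∑ v ∈ Q, (h + coverCount {S}) v = cliqueWeight H (h + coverCount {S}) → (Q ∩ S).Nonempty) :
    HasOptimalColoring H (h + coverCount {S}) := by
  obtain ⟨m, hmind, rfl, hmcard⟩ := hh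
  refine ⟨S ::ₘ m, ?_, coverCount_cons S m, ?_⟩
  · simpa [hSind] using hmind
  · rw [Multiset.card_cons]
    exact Nat.succ_le_of_lt (hmcard.trans_lt (cliqueWeight_lt_cliqueWeight_add_coverCount hS))

theorem hasOptimalColoring_of_forall_singleton
    (hbase : ∀ T : Finset V, HasOptimalColoring H (coverCount {T})) (h : V → ℕ) :
    HasOptimalColoring H h := by
  induction hn : ∑ v, h v using Nat.strong_induction_on generalizing h with
  | _ n ih =>
  by_cases hle : ∀ v, h v ≤ 1
  · have : h = coverCount {univ.filter (h · = 1)} := by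
      ext v
      have := hle v
      simp only [coverCount_singleton_apply, mem_filter, mem_univ, true_and]
      split_ifs <;> omega
    exact this ▸ hbase _
  obtain ⟨v, hv⟩ := not_forall.1 hle
  set h' := Function.update h v (h v - 1)
  have hh' : h = h' + coverCount {{v}} := by
    ext u
    by_cases hu : u = v
    · subst hu; simp [h', coverCount_singleton_apply]; omega
    · simp [h', coverCount_singleton_apply, hu]
  have hsum' : ∑ u, h' u < n := by
    rw [← hn, hh', sum_add_coverCount_singleton]; simp
  obtain ⟨m', hm'ind, hm'h', hm'card⟩ := ih _ hsum' h' rfl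
  -- a colour class through `v` meets every maximum clique of `h`
  obtain ⟨S, hSm', hvS⟩ : ∃ S ∈ m', v ∈ S := by
    rw [← Multiset.countP_pos, ← coverCount, hm'h']
    simp [h']; omega
  have hSh : coverCount {S} ≤ h := by
    intro u
    rw [coverCount_singleton_apply]
    split_ifs with hu
    · calc 1 ≤ coverCount m' u := Multiset.countP_pos_of_mem hSm' hu
        _ = h' u := by rw [hm'h']
        _ ≤ h u := by rw [hh']; exact Nat.le_add_right _ _
    · exact Nat.zero_le _
  obtain ⟨h₁, hh₁⟩ : ∃ h₁, h = h₁ + coverCount {S} := ⟨_, (tsub_add_cancel_of_le hSh).symm⟩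
  have hsum₁ : ∑ u, h₁ u < n := by
    have := card_pos.2 ⟨v, hvS⟩
    rw [← hn, hh₁, sum_add_coverCount_singleton, univ_inter]
    omega
  rw [hh₁]
  refine (ih _ hsum₁ _ rfl).add_coverCount (hm'ind S hSm') fun Q hQ hQmax => ?_
  rw [← hh₁] at hQmax
  by_cases hvQ : v ∈ Q
  · exact ⟨v, mem_inter.2 ⟨hvQ, hvS⟩⟩
  refine inter_nonempty_of_card_le_sum_coverCount hm'ind hQ ?_ hSm'
  calc Multiset.card m' ≤ cliqueWeight H h' := hm'card
    _ ≤ cliqueWeight H h := cliqueWeight_mono (hh' ▸ le_self_add)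
    _ = ∑ u ∈ Q, h u := hQmax.symm
    _ = ∑ u ∈ Q, coverCount m' u := by
      rw [hm'h']
      exact sum_congr rfl fun u hu => (Function.update_of_ne (ne_of_mem_of_not_mem hu hvQ) _ _).symm

end WeightedColoring

section Perfect

variable {V : Type*} [Fintype V] {G : SimpleGraph V}

theorem IsPerfect.hasOptimalColoring_singleton (hG : IsPerfect G) (T : Finset V) :
    HasOptimalColoring G (coverCount {T}) := by
  set k := (G.induce (T : Set V)).cliqueNum
  obtain ⟨C⟩ : (G.induce (T : Set V)).Colorable k :=
    (chromaticNumber_le_iff_colorable).1 (hG T).le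
  let col : V → Option (Fin k) := fun v => if hv : v ∈ T then some (C ⟨v, hv⟩) else none
  have hcol : ∀ v i, col v = some i ↔ ∃ hv : v ∈ T, C ⟨v, hv⟩ = i := by
    intro v i
    by_cases hv : v ∈ T <;> simp [col, hv]
  refine ⟨(univ : Finset (Fin k)).val.map fun i => univ.filter (col · = some i), ?_, ?_, ?_⟩
  · simp only [Multiset.mem_map, mem_val, mem_univ, true_and, forall_exists_index,
      forall_apply_eq_imp_iff]
    intro i a ha b hb hab hadj
    simp only [coe_filter, mem_univ, true_and, Set.mem_ofPred_eq, hcol] at ha hb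
    obtain ⟨ha, rfl⟩ := ha
    obtain ⟨hb, hab'⟩ := hb
    exact C.valid (G := G.induce (T : Set V)) (v := ⟨a, ha⟩) (w := ⟨b, hb⟩) hadj hab'.symm
  · ext v
    rw [coverCount_singleton_apply, coverCount, Multiset.countP_map]
    simp only [mem_filter, mem_univ, true_and, ← filter_val, card_val]
    by_cases hv : v ∈ T
    · simp [col, hv, filter_eq]
    · simp [col, hv]
  · obtain ⟨s, hs⟩ := (G.induce (T : Set V)).exists_isNClique_cliqueNum
    have hQ : G.IsClique ((s.map (Function.Embedding.subtype _) : Finset V) : Set V) := by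
      rw [coe_map]
      exact isClique_induce_iff.1 hs.isClique
    calc Multiset.card _ = k := by simp
      _ = ∑ v ∈ s.map (Function.Embedding.subtype _), coverCount {T} v := by
        rw [sum_coverCount_singleton, inter_eq_left.2, card_map, hs.card_eq]
        intro v hv
        obtain ⟨u, -, rfl⟩ := mem_map.1 hv
        exact u.2
      _ ≤ cliqueWeight G (coverCount {T}) := sum_le_cliqueWeight hQ _

end Perfect

section Complement

variable {V : Type*} [Fintype V] {H : SimpleGraph V}

lemma sum_coverCount_le_card_mul {m : Multiset (Finset V)} (hm : ∀ S ∈ m, H.IsIndepSet (S : Set V))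
    (T : Finset V) :
    ∑ v ∈ T, coverCount m v ≤ Multiset.card m * cliqueWeight Hᶜ (coverCount {T}) := by
  rw [sum_coverCount]
  simpa using Multiset.sum_le_card_nsmul (m.map fun S => #(T ∩ S)) _ (by
    simpa [sum_coverCount_singleton, inter_comm] using fun S hS =>
      sum_le_cliqueWeight ((isClique_compl _).2 (hm S hS)) (coverCount {T}))

lemma cliqueWeight_coverCount_le_card_sub_one {𝒦 : Finset (Finset V)} {f : Finset V → Finset V}
    (hf : ∀ Q, H.IsIndepSet (f Q : Set V))
    (hmiss : ∀ Q₀ : Finset V, H.IsClique (Q₀ : Set V) → ∃ Q ∈ 𝒦, Q₀ ∩ f Q = ∅) :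
    cliqueWeight H (coverCount (𝒦.val.map f)) ≤ #𝒦 - 1 := by
  refine Finset.sup_le fun Q₀ hQ₀ => ?_
  simp only [mem_filter, mem_univ, true_and] at hQ₀
  obtain ⟨Q, hQ, hQ₀Q⟩ := hmiss Q₀ hQ₀
  rw [sum_coverCount, Multiset.map_map]
  change ∑ Q ∈ 𝒦, #(Q₀ ∩ f Q) ≤ #𝒦 - 1
  rw [← sum_erase_add _ _ hQ, hQ₀Q, card_empty, add_zero, ← card_erase_of_mem hQ]
  simpa using sum_le_card_nsmul _ _ 1 fun Q _ => hQ₀.card_inter_le_one (hf Q)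

/-- `cliqueWeight Hᶜ (coverCount {T})` is the independence number of `H[T]`. -/
theorem exists_isClique_inter_nonempty (hH : ∀ h, HasOptimalColoring H h) {T : Finset V}
    (hT : T.Nonempty) :
    ∃ Q ⊆ T, H.IsClique (Q : Set V) ∧ ∀ S : Finset V, Hᶜ.IsClique (S : Set V) →
      ∑ v ∈ S, coverCount {T} v = cliqueWeight Hᶜ (coverCount {T}) → (S ∩ Q).Nonempty := by
  set α := cliqueWeight Hᶜ (coverCount {T})
  by_contra! hcon
  have hmiss : ∀ Q : Finset V, ∃ S ⊆ T, H.IsIndepSet (S : Set V) ∧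
      (Q ⊆ T → H.IsClique (Q : Set V) → #S = α ∧ Q ∩ S = ∅) := by
    intro Q
    by_cases hQ : Q ⊆ T ∧ H.IsClique (Q : Set V)
    · obtain ⟨S, hS, hSα, hQS⟩ := hcon Q hQ.1 hQ.2
      refine ⟨T ∩ S, inter_subset_left, ?_, fun _ _ => ⟨?_, ?_⟩⟩
      · exact Set.Pairwise.mono (by simp) ((isClique_compl _).1 hS)
      · rw [← hSα, sum_coverCount_singleton, inter_comm]
      · rw [inter_comm] at hQS
        exact subset_empty.1 (hQS ▸ inter_subset_inter_left inter_subset_right)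
    · exact ⟨∅, empty_subset _, by simp, fun h₁ h₂ => absurd ⟨h₁, h₂⟩ hQ⟩
  choose f hfT hfind hf using hmiss
  -- `𝒦` contains `∅`, so that `Q₀ ∩ T ∈ 𝒦` for every clique `Q₀`
  set 𝒦 := univ.filter fun Q : Finset V => Q ⊆ T ∧ H.IsClique (Q : Set V)
  have h𝒦 : ∀ {Q}, Q ∈ 𝒦 ↔ Q ⊆ T ∧ H.IsClique (Q : Set V) := by simp [𝒦]
  obtain ⟨t, ht⟩ := hT
  have hα : 1 ≤ α := by
    simpa [coverCount_singleton_apply, ht] using sum_le_cliqueWeight (H := Hᶜ) (Q := {t}) (by simp)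
      (coverCount {T})
  have h𝒦card : 1 ≤ #𝒦 := card_pos.2 ⟨∅, h𝒦.2 ⟨empty_subset _, by simp⟩⟩
  obtain ⟨m, hmind, hm, hmcard⟩ := hH (coverCount (𝒦.val.map f))
  have hclique : cliqueWeight H (coverCount (𝒦.val.map f)) ≤ #𝒦 - 1 := by
    refine cliqueWeight_coverCount_le_card_sub_one hfind fun Q₀ hQ₀ => ⟨Q₀ ∩ T, ?_, ?_⟩
    · exact h𝒦.2 ⟨inter_subset_right, hQ₀.subset inter_subset_left⟩
    · refine subset_empty.1 <| (hf _ inter_subset_right (hQ₀.subset inter_subset_left)).2 ▸ ?_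
      exact subset_inter (subset_inter inter_subset_left (inter_subset_right.trans (hfT _)))
        inter_subset_right
  have hcount : #𝒦 * α ≤ Multiset.card m * α :=
    calc #𝒦 * α = ∑ Q ∈ 𝒦, #(T ∩ f Q) := (sum_const_nat fun Q hQ => by
          rw [inter_eq_right.2 (hfT Q), (hf Q (h𝒦.1 hQ).1 (h𝒦.1 hQ).2).1]).symm
      _ = ∑ v ∈ T, coverCount m v := by rw [hm, sum_coverCount, Multiset.map_map]; rfl
      _ ≤ Multiset.card m * α := sum_coverCount_le_card_mul hmind T
  have := Nat.le_of_mul_le_mul_right (hcount.trans (Nat.mul_le_mul_right α (hmcard.trans hclique)))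
    hα
  omega

/-- The weak perfect graph theorem in covering form. -/
theorem hasOptimalColoring_compl_singleton (hH : ∀ h, HasOptimalColoring H h) (T : Finset V) :
    HasOptimalColoring Hᶜ (coverCount {T}) := by
  induction T using Finset.strongInduction with
  | H T ih =>
  rcases T.eq_empty_or_nonempty with rfl | hT
  · exact ⟨0, by simp, by ext; simp [coverCount_singleton_apply], by simp⟩
  obtain ⟨Q, hQT, hQ, hQmeets⟩ := exists_isClique_inter_nonempty hH hT
  obtain ⟨S, hS, hSmax⟩ := exists_isClique_sum_eq_cliqueWeight Hᶜ (coverCount {T})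
  have hsplit : coverCount {T} = coverCount {T \ Q} + coverCount {Q} := by
    ext v
    by_cases hvQ : v ∈ Q
    · simp [coverCount_singleton_apply, hvQ, hQT hvQ]
    · simp [coverCount_singleton_apply, hvQ]
  rw [hsplit]
  refine (ih _ (sdiff_ssubset hQT ((hQmeets S hS hSmax).mono inter_subset_right))).add_coverCount
    ((isIndepSet_compl _).2 hQ) ?_
  rw [← hsplit]
  exact hQmeets

end Complement

theorem IsPerfect.hasOptimalColoring_compl {V : Type*} [Fintype V] {G : SimpleGraph V}
    (hG : IsPerfect G) (h : V → ℕ) : HasOptimalColoring Gᶜ h :=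
  hasOptimalColoring_of_forall_singleton
    (hasOptimalColoring_compl_singleton
      (hasOptimalColoring_of_forall_singleton hG.hasOptimalColoring_singleton)) h

section Duality

variable {V : Type*} [Fintype V] {G : SimpleGraph V} {w : V → ℝ}

def IsFractionalCliqueCover (G : SimpleGraph V) (w : V → ℝ) (y : Finset V → ℝ) : Prop :=
  (∀ Q ∈ cliquesOf G, 0 ≤ y Q) ∧ ∀ v, w v ≤ ∑ Q ∈ (cliquesOf G).filter (fun Q => v ∈ Q), y Q

lemma mem_cliquesOf {Q : Finset V} : Q ∈ cliquesOf G ↔ Q.Nonempty ∧ G.IsClique (Q : Set V) := by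
  simp [cliquesOf]

lemma isClosed_setOf_isFractionalCliqueCover (G : SimpleGraph V) (w : V → ℝ) :
    IsClosed {y | IsFractionalCliqueCover G w y} := by
  simp only [IsFractionalCliqueCover, Set.ofPred_and, Set.ofPred_forall]
  exact (isClosed_iInter fun Q => isClosed_iInter fun _ =>
    isClosed_le continuous_const (continuous_apply Q)).inter
      (isClosed_iInter fun v => isClosed_le continuous_const
        (continuous_finsetSum _ fun Q _ => continuous_apply Q))

lemma isGreatest_stableWorth (G : SimpleGraph V) (w : V → ℝ) (T : Set V) :
    IsGreatest {x : ℝ | ∃ S : Finset V, ↑S ⊆ T ∧ IsStableSet G ↑S ∧ x = ∑ v ∈ S, w v}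
      (stableWorth G w T) := by
  have hne : {x : ℝ | ∃ S : Finset V, ↑S ⊆ T ∧ IsStableSet G ↑S ∧ x = ∑ v ∈ S, w v}.Nonempty :=
    ⟨0, ∅, by simp [IsStableSet]⟩
  have hfin : {x : ℝ | ∃ S : Finset V, ↑S ⊆ T ∧ IsStableSet G ↑S ∧ x = ∑ v ∈ S, w v}.Finite :=
    (Set.finite_range fun S : Finset V => ∑ v ∈ S, w v).subset fun _ ⟨S, _, _, hx⟩ => ⟨S, hx.symm⟩
  exact ⟨hne.csSup_mem hfin, fun _ hx => le_csSup hfin.bddAbove hx⟩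

/-- Weak duality: a clique meets a stable set at most once. -/
lemma IsFractionalCliqueCover.sum_le {y : Finset V → ℝ} (hy : IsFractionalCliqueCover G w y)
    {S : Finset V} (hS : IsStableSet G ↑S) : ∑ v ∈ S, w v ≤ ∑ Q ∈ cliquesOf G, y Q :=
  calc ∑ v ∈ S, w v ≤ ∑ v ∈ S, ∑ Q ∈ (cliquesOf G).filter (fun Q => v ∈ Q), y Q :=
        sum_le_sum fun v _ => hy.2 v
    _ = ∑ Q ∈ cliquesOf G, #(S ∩ Q) • y Q := by
        simp_rw [sum_filter]
        rw [sum_comm]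
        simp [sum_ite_mem]
    _ ≤ ∑ Q ∈ cliquesOf G, y Q := sum_le_sum fun Q hQ => by
        rw [nsmul_eq_mul, inter_comm]
        exact mul_le_of_le_one_left (hy.1 Q hQ)
          (by exact_mod_cast (mem_cliquesOf.1 hQ).2.card_inter_le_one hS)

lemma sum_filter_count_eq_countP {α : Type*} [DecidableEq α] (𝒜 : Finset α) (m : Multiset α)
    (p : α → Prop) [DecidablePred p] (hm : ∀ a ∈ m, p a → a ∈ 𝒜) :
    ∑ a ∈ 𝒜.filter p, m.count a = m.countP p := by
  rw [Multiset.countP_eq_card_filter, ← Multiset.sum_count_eq_card (s := 𝒜.filter p)]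
  · refine sum_congr rfl fun a ha => (Multiset.count_filter_of_pos (mem_filter.1 ha).2).symm
  · intro a ha
    obtain ⟨ha, hpa⟩ := Multiset.mem_filter.1 ha
    exact mem_filter.2 ⟨hm a ha hpa, hpa⟩

/-- The witness is an optimal clique cover of `⌈d * w⌉₊` scaled by `1 / d`; rounding up costs at
most one per vertex of the heaviest stable set. -/
lemma IsPerfect.exists_isFractionalCliqueCover_le (hG : IsPerfect G) (hw : ∀ v, 0 ≤ w v) {W : ℝ}
    (hW : ∀ S : Finset V, IsStableSet G ↑S → ∑ v ∈ S, w v ≤ W) {d : ℕ} (hd : 0 < d) :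
    ∃ y, IsFractionalCliqueCover G w y ∧ (∀ Q, y Q ∈ Set.Icc 0 (W + Fintype.card V / d)) ∧
      ∑ Q ∈ cliquesOf G, y Q ≤ W + Fintype.card V / d := by
  have hd' : (0 : ℝ) < d := by exact_mod_cast hd
  obtain ⟨m, hmind, hm, hmcard⟩ := hG.hasOptimalColoring_compl fun v => ⌈d * w v⌉₊
  have hcard : (Multiset.card m : ℝ) / d ≤ W + Fintype.card V / d := by
    obtain ⟨S, hS, hSmax⟩ := exists_isClique_sum_eq_cliqueWeight Gᶜ fun v => ⌈d * w v⌉₊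
    rw [div_le_iff₀ hd', add_mul, div_mul_cancel₀ _ hd'.ne']
    calc (Multiset.card m : ℝ) ≤ ∑ v ∈ S, (⌈d * w v⌉₊ : ℝ) := by
          rw [← Nat.cast_sum, hSmax]; exact_mod_cast hmcard
      _ ≤ ∑ v ∈ S, (d * w v + 1) :=
          sum_le_sum fun v _ => (Nat.ceil_lt_add_one (by positivity [hw v])).le
      _ = d * ∑ v ∈ S, w v + #S := by rw [sum_add_distrib, mul_sum]; simp
      _ ≤ d * W + Fintype.card V := add_le_add
          (mul_le_mul_of_nonneg_left (hW S ((isClique_compl _).1 hS)) hd'.le)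
          (by exact_mod_cast card_le_univ S)
      _ = W * d + Fintype.card V := by ring
  have hcliques : ∀ Q ∈ m, G.IsClique (Q : Set V) := fun Q hQ => (isIndepSet_compl _).1 (hmind Q hQ)
  refine ⟨fun Q => m.count Q / d, ⟨fun Q _ => by positivity, fun v => ?_⟩,
    fun Q => ⟨by positivity, ?_⟩, ?_⟩
  · rw [← sum_div, ← Nat.cast_sum, sum_filter_count_eq_countP (cliquesOf G) m (v ∈ ·)
      fun Q hQ hvQ => mem_cliquesOf.2 ⟨⟨v, hvQ⟩, hcliques Q hQ⟩, le_div_iff₀ hd', mul_comm]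
    exact (Nat.le_ceil _).trans_eq (by exact_mod_cast (congrFun hm v).symm)
  · exact (div_le_div_of_nonneg_right (by exact_mod_cast Multiset.count_le_card Q m) hd'.le).trans
      hcard
  · rw [← sum_div]
    refine (div_le_div_of_nonneg_right ?_ hd'.le).trans hcard
    exact_mod_cast (sum_le_sum_of_subset (subset_univ _)).trans
      (Multiset.sum_count_eq_card fun _ _ => mem_univ _).le

lemma IsPerfect.exists_isFractionalCliqueCover_lt (hG : IsPerfect G) (hw : ∀ v, 0 ≤ w v) {W : ℝ}
    (hW : ∀ S : Finset V, IsStableSet G ↑S → ∑ v ∈ S, w v ≤ W) {ε : ℝ} (hε : 0 < ε) :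
    ∃ y ∈ Set.univ.pi (fun _ => Set.Icc 0 (W + Fintype.card V)) ∩
      {y | IsFractionalCliqueCover G w y}, ∑ Q ∈ cliquesOf G, y Q < W + ε := by
  obtain ⟨d, hd⟩ := exists_nat_gt (Fintype.card V / ε)
  have hd0 : 0 < d := Nat.cast_pos.1 ((div_nonneg (Nat.cast_nonneg _) hε.le).trans_lt hd)
  have hd' : (0 : ℝ) < d := Nat.cast_pos.2 hd0
  have hnd : (Fintype.card V : ℝ) / d ≤ Fintype.card V :=
    div_le_self (Nat.cast_nonneg _) (Nat.one_le_cast.2 hd0)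
  obtain ⟨y, hy, hbox, hsum⟩ := hG.exists_isFractionalCliqueCover_le hw hW hd0
  refine ⟨y, ⟨fun Q _ => Set.Icc_subset_Icc le_rfl (by linarith) (hbox Q), hy⟩, hsum.trans_lt ?_⟩
  have : (Fintype.card V : ℝ) / d < ε := by
    rw [div_lt_iff₀ hd', mul_comm, ← div_lt_iff₀ hε]
    exact hd
  linarith

end Duality

lemma IsCompact.exists_eq_of_forall_exists_lt_add {X : Type*} [TopologicalSpace X] {K : Set X}
    {f : X → ℝ} {a : ℝ} (hK : IsCompact K) (hf : ContinuousOn f K) (hlb : ∀ x ∈ K, a ≤ f x)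
    (happrox : ∀ ε > 0, ∃ x ∈ K, f x < a + ε) : ∃ x ∈ K, f x = a := by
  obtain ⟨x₀, hx₀K, -⟩ := happrox 1 one_pos
  obtain ⟨x, hxK, hxmin⟩ := hK.exists_isMinOn ⟨x₀, hx₀K⟩ hf
  refine ⟨x, hxK, le_antisymm (le_of_forall_pos_lt_add fun ε hε => ?_) (hlb x hxK)⟩
  obtain ⟨y, hyK, hy⟩ := happrox ε hε
  exact (hxmin hyK).trans_lt hy

theorem perfect_graph_lp_duality
    {V : Type*} [Fintype V] (G : SimpleGraph V) (hG : IsPerfect G)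
    (w : V → ℝ) (hw : ∀ v, 0 ≤ w v) :
    -- the minimum of `Σ_Q y_Q` over dual-feasible nonnegative `y` is attained and
    -- equals `worth(G)`; in particular some dual-feasible `y` achieves `worth(G)`
    IsLeast
      {s : ℝ | ∃ y : Finset V → ℝ,
        (∀ Q ∈ cliquesOf G, 0 ≤ y Q) ∧
        (∀ v : V, w v ≤ ∑ Q ∈ (cliquesOf G).filter (fun Q => v ∈ Q), y Q) ∧
        s = ∑ Q ∈ cliquesOf G, y Q}
      (stableWorth G w Set.univ) := by
  obtain ⟨⟨S₀, -, hS₀, hS₀W⟩, hW⟩ := isGreatest_stableWorth G w Set.univ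
  have hWle : ∀ S : Finset V, IsStableSet G ↑S → ∑ v ∈ S, w v ≤ stableWorth G w Set.univ :=
    fun S hS => hW ⟨S, Set.subset_univ _, hS, rfl⟩
  have hlb : ∀ y, IsFractionalCliqueCover G w y →
      stableWorth G w Set.univ ≤ ∑ Q ∈ cliquesOf G, y Q :=
    fun y hy => hS₀W ▸ hy.sum_le hS₀
  have hK := (isCompact_univ_pi fun _ : Finset V => isCompact_Icc (a := (0 : ℝ))
    (b := stableWorth G w Set.univ + Fintype.card V)).inter_right
      (isClosed_setOf_isFractionalCliqueCover G w)
  obtain ⟨y, ⟨-, hy⟩, hyW⟩ := hK.exists_eq_of_forall_exists_lt_add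
    (continuous_finsetSum _ fun Q _ => continuous_apply Q).continuousOn (fun y hy => hlb y hy.2)
    fun ε hε => hG.exists_isFractionalCliqueCover_lt hw hWle hε
  exact ⟨⟨y, hy.1, hy.2, hyW.symm⟩, fun s ⟨y, hy0, hy, hs⟩ => hs ▸ hlb y ⟨hy0, hy⟩⟩
end

section
/- (TDI of the polymatroid constraint system) Let M be a matroid on a finite ground set U with rank function r and integral element weights w : U → ℕ. Then there exists an integer-valued nonnegative function y on the subsets of U with Σ_{S : e ∈ S} y_S ≥ w(e) for every e ∈ U and Σ_{S ⊆ U} r(S)·y_S = worth(M), where worth(M) is the maximum of Σ_{e ∈ I} w(e) over independent sets I of M. -/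
/-!
Cut the weights into their superlevel sets `Sₖ = {e | k < w e}`, `k < t := max w`. These form a
descending chain, so extending a basis of each `Sₖ₊₁` to one of `Sₖ` yields a single independent
set `I` meeting every `Sₖ` in a basis. By the layer-cake formula `w(J) = ∑ₖ |J ∩ Sₖ|`, every
independent `J` has `w(J) ≤ ∑ₖ r(Sₖ)`, with equality for `J = I`; so `worth(M) = ∑ₖ r(Sₖ)`.
The dual solution `y` counts how often `S` occurs in the chain: then `∑ₛ r(S) y_S = ∑ₖ r(Sₖ)`,
and `e` lies in exactly `w e` of the `Sₖ`.
-/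

open scoped Classical

/-- `worth(M)` for integral weights: the maximum weight of an independent set, in `ℕ`. -/
noncomputable def matroidWorthNat {α : Type*} [Fintype α] (M : Matroid α) (w : α → ℕ) : ℕ :=
  sSup {x : ℕ | ∃ I : Finset α, M.Indep (↑I : Set α) ∧ x = ∑ e ∈ I, w e}

open Finset

namespace Matroid

variable {α : Type*} {M : Matroid α} {I J : Set α} {S : Set α}

lemma IsBasis'.ncard_le_ncard [Finite α] (hI : M.IsBasis' I S) (hJ : M.Indep J) (hJS : J ⊆ S) :
    J.ncard ≤ I.ncard := by
  have h : J.encard ≤ I.encard := hI.encard_eq_eRk ▸ hJ.encard_le_eRk_of_subset hJS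
  rw [← (Set.toFinite J).cast_ncard_eq, ← (Set.toFinite I).cast_ncard_eq] at h
  exact_mod_cast h

lemma IsBasis'.matroidRank_eq_s13 [Finite α] (hI : M.IsBasis' I S) : matroidRank M S = I.ncard := by
  refine IsGreatest.csSup_eq ⟨⟨I, hI.subset, hI.indep, rfl⟩, ?_⟩
  rintro _ ⟨J, hJS, hJ, rfl⟩
  exact hI.ncard_le_ncard hJ hJS

lemma Indep.ncard_le_matroidRank_s13 [Finite α] (hJ : M.Indep J) (hJS : J ⊆ S) :
    J.ncard ≤ matroidRank M S := by
  obtain ⟨I, hI⟩ := M.exists_isBasis' S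
  exact hI.matroidRank_eq_s13 ▸ hI.ncard_le_ncard hJ hJS

lemma exists_isBasis'_inter_of_antitone (S : ℕ → Set α) (hS : Antitone S) (n : ℕ) :
    ∃ I ⊆ S 0, ∀ k ≤ n, M.IsBasis' (I ∩ S k) (S k) := by
  induction n generalizing S with
  | zero =>
    obtain ⟨I, hI⟩ := M.exists_isBasis' (S 0)
    refine ⟨I, hI.subset, fun k hk => ?_⟩
    rwa [Nat.le_zero.1 hk, Set.inter_eq_self_of_subset_left hI.subset]
  | succ n ih =>
    obtain ⟨I, hIS, hI⟩ := ih (fun k => S (k + 1)) (hS.comp_monotone (fun _ _ h => by omega))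
    have hI1 : M.IsBasis' I (S 1) := by
      simpa [Set.inter_eq_self_of_subset_left hIS] using hI 0 (Nat.zero_le n)
    obtain ⟨J, hJ, hIJ⟩ := hI1.indep.subset_isBasis'_of_subset (hIS.trans (hS zero_le_one))
    refine ⟨J, hJ.subset, fun k hk => ?_⟩
    rcases k with _ | k
    · rwa [Set.inter_eq_self_of_subset_left hJ.subset]
    · have hk' := hI k (by omega)
      rwa [hk'.eq_of_subset_indep (hJ.indep.inter_right _)
        (Set.inter_subset_inter_left _ hIJ) Set.inter_subset_right] at hk'

end Matroid

namespace Finset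

variable {ι β : Type*}

lemma card_filter_range_lt {n t : ℕ} (hn : n ≤ t) : #{k ∈ range t | k < n} = n := by
  rw [show {k ∈ range t | k < n} = range n by ext; simp only [mem_filter, mem_range]; omega,
    card_range]

lemma sum_eq_sum_range_card_filter_lt (s : Finset ι) (w : ι → ℕ) {t : ℕ} (ht : ∀ e ∈ s, w e ≤ t) :
    ∑ e ∈ s, w e = ∑ k ∈ range t, #{e ∈ s | k < w e} := by
  simp only [card_filter]
  rw [sum_comm]
  refine sum_congr rfl fun e he => ?_
  rw [← card_filter, card_filter_range_lt (ht e he)]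

lemma sum_mul_card_filter_eq [Fintype β] [DecidableEq β] (K : Finset ι) (T : ι → β) (g : β → ℕ) :
    ∑ b, g b * #{k ∈ K | T k = b} = ∑ k ∈ K, g (T k) := by
  rw [← sum_fiberwise' K T g]
  simp only [sum_const, smul_eq_mul, mul_comm]

end Finset

lemma matroidWorthNat_eq_sum_matroidRank {α : Type*} [Fintype α] (M : Matroid α) (w : α → ℕ)
    {t : ℕ} (ht : ∀ e, w e ≤ t) :
    matroidWorthNat M w = ∑ k ∈ range t, matroidRank M {e | k < w e} := by
  refine IsGreatest.csSup_eq ⟨?_, ?_⟩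
  · obtain ⟨I, hIS, hI⟩ := M.exists_isBasis'_inter_of_antitone (fun k => {e | k < w e})
      (fun _ _ h _ he => h.trans_lt he) t
    refine ⟨(Set.toFinite I).toFinset, ?_, ?_⟩
    · simpa [Set.inter_eq_self_of_subset_left hIS] using (hI 0 (Nat.zero_le t)).indep
    · rw [sum_eq_sum_range_card_filter_lt _ w fun e _ => ht e]
      refine sum_congr rfl fun k hk => ?_
      rw [(hI k (mem_range.1 hk).le).matroidRank_eq_s13, ← Set.ncard_coe_finset]
      congr 1
      ext e
      simp
  · rintro _ ⟨I, hI, rfl⟩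
    rw [sum_eq_sum_range_card_filter_lt _ w fun e _ => ht e]
    refine sum_le_sum fun k _ => ?_
    rw [← Set.ncard_coe_finset]
    exact (hI.subset (coe_subset.2 (filter_subset _ _))).ncard_le_matroidRank_s13 (by simp)

theorem polymatroid_system_TDI_general
    {α : Type*} [Fintype α] (M : Matroid α) (w : α → ℕ) :
    ∃ y : Finset α → ℕ,
      (∀ e : α,
        w e ≤ ∑ S ∈ (Finset.univ : Finset (Finset α)).filter (fun S => e ∈ S), y S) ∧
      ∑ S : Finset α, matroidRank M ↑S * y S = matroidWorthNat M w := by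
  set t := univ.sup w
  have ht : ∀ e, w e ≤ t := fun e => le_sup (mem_univ e)
  let T : ℕ → Finset α := fun k => {e | k < w e}
  refine ⟨fun S => #{k ∈ range t | T k = S}, fun e => ?_, ?_⟩
  · have hcount := sum_mul_card_filter_eq (range t) T fun S => if e ∈ S then 1 else 0
    simp only [boole_mul] at hcount
    rw [sum_filter, hcount, ← card_filter]
    simp [T, card_filter_range_lt (ht e)]
  · rw [sum_mul_card_filter_eq (range t) T, matroidWorthNat_eq_sum_matroidRank M w ht]
    simp [T]

theorem polymatroid_system_TDI
    {α : Type*} [Fintype α] (M : Matroid α) (hE : M.E = Set.univ) (w : α → ℕ) :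
    ∃ y : Finset α → ℕ,
      (∀ e : α,
        w e ≤ ∑ S ∈ (Finset.univ : Finset (Finset α)).filter (fun S => e ∈ S), y S) ∧
      ∑ S : Finset α, matroidRank M ↑S * y S = matroidWorthNat M w :=
  polymatroid_system_TDI_general M w
end

section
/- For every finite perfect graph G = (V,E), the minimum number of cliques needed to cover all vertices of G equals the independence number α(G), the maximum size of a stable set of G. -/
/-- The independence number `α(G)`: the maximum size of a stable set. -/
noncomputable def indepNum {V : Type*} [Fintype V] (G : SimpleGraph V) : ℕ :=
  sSup {n : ℕ | ∃ S : Finset V, IsStableSet G (↑S : Set V) ∧ S.card = n}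

/-!
Lovász's weak perfect graph theorem, by Gasparian's rank argument. Perfection gives
`|T| ≤ α(T) ω(T)` for every vertex set `T`, a condition that is symmetric under complementation.
Conversely it forces `T` to be `ω(T)`-colorable: in a minimal counterexample `T`, deleting any
independent set leaves a clique of size `ω`. A maximum independent set `S₀`, together with the color
classes of `ω`-colorings of `T - x` for `x ∈ S₀`, gives `αω + 1` independent sets covering every
vertex at least `α` times; so an `ω`-clique missing one of them meets each of the others exactly
once. The cliques-versus-sets incidence matrix is then `J - I`, which is nonsingular, and the
incidence vectors of the sets are linearly independent in `ℚ^T`, i.e. `αω + 1 ≤ |T|`.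
Applied to `Gᶜ`, this covers `G` by `α(G)` cliques; fewer cannot do, as a clique meets a maximum
independent set at most once.
-/

open Finset

namespace Finset

variable {ι α : Type*} [Fintype ι] [DecidableEq ι] [DecidableEq α]

lemma card_inter_eq_ite_of_disjoint {S : ι → Finset α} {Q : Finset α} {a : ℕ}
    (hle : ∀ j, #(Q ∩ S j) ≤ 1) (hmult : ∀ v ∈ Q, a ≤ #{j | v ∈ S j})
    (hcard : Fintype.card ι ≤ #Q * a + 1) {i : ι} (hi : Disjoint Q (S i)) (j : ι) :
    #(Q ∩ S j) = if i = j then 0 else 1 := by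
  rw [disjoint_iff_inter_eq_empty] at hi
  split_ifs with hij
  · rw [← hij, hi, card_empty]
  set N : Finset ι := {j | (Q ∩ S j).Nonempty}
  have hdouble : ∑ j, #(Q ∩ S j) = ∑ v ∈ Q, #{j | v ∈ S j} := by
    simp_rw [← filter_mem_eq_inter, card_eq_sum_ones, sum_filter]
    exact sum_comm
  have hsum_le : ∑ j, #(Q ∩ S j) ≤ #N := by
    rw [card_filter]
    refine sum_le_sum fun j _ => ?_
    split_ifs with h
    · exact hle j
    · rw [not_nonempty_iff_eq_empty.1 h, card_empty]
  have hN : N = univ.erase i := by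
    refine eq_of_subset_of_card_le (fun j hj => mem_erase.2 ⟨?_, mem_univ j⟩) ?_
    · rintro rfl
      exact (mem_filter.1 hj).2.ne_empty hi
    · have := card_nsmul_le_sum Q _ _ hmult
      rw [card_erase_of_mem (mem_univ i), card_univ, smul_eq_mul] at *
      omega
  have hj : j ∈ N := hN ▸ mem_erase.2 ⟨Ne.symm hij, mem_univ j⟩
  exact le_antisymm (hle j) (card_pos.2 (mem_filter.1 hj).2)

lemma card_le_card_of_card_inter_eq_ite {U : Finset α} {S Q : ι → Finset α}
    (hSU : ∀ i, S i ⊆ U) (hι : Fintype.card ι ≠ 1)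
    (hQS : ∀ i j, #(Q i ∩ S j) = if i = j then 0 else 1) : Fintype.card ι ≤ #U := by
  let indicator (A : Finset α) : U → ℚ := fun x => if (x : α) ∈ A then 1 else 0
  have hdot : ∀ i j, indicator (Q i) ⬝ᵥ indicator (S j) = if i = j then 0 else 1 := by
    intro i j
    have : indicator (Q i) ⬝ᵥ indicator (S j) = #(Q i ∩ S j) := by
      simp only [dotProduct, indicator, ite_mul, one_mul, zero_mul, ← ite_and, ← mem_inter]
      rw [sum_coe_sort U (fun x => if x ∈ Q i ∩ S j then (1 : ℚ) else 0), sum_boole,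
        filter_mem_eq_inter, inter_eq_right.2 (inter_subset_right.trans (hSU j))]
    rw [this, hQS]
    split_ifs <;> simp
  have hli : LinearIndependent ℚ fun i => indicator (S i) := by
    rw [Fintype.linearIndependent_iff]
    intro g hg
    have hrow : ∀ i, ∑ j, g j = g i := fun i => by
      have := congrArg (indicator (Q i) ⬝ᵥ ·) hg
      simp only [dotProduct_sum, dotProduct_smul, hdot, smul_eq_mul, mul_ite, mul_zero, mul_one,
        dotProduct_zero, sum_ite, filter_eq, filter_ne, mem_univ, if_true, sum_const_zero,
        zero_add] at this
      rw [← add_sum_erase univ g (mem_univ i), this, add_zero]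
    have htotal : ∑ j, g j = 0 := by
      have : ∑ j, g j = Fintype.card ι * ∑ j, g j := by
        conv_lhs => rw [sum_congr rfl fun i _ => (hrow i).symm]
        simp
      have hne : (Fintype.card ι : ℚ) - 1 ≠ 0 := sub_ne_zero.2 (by exact_mod_cast hι)
      have hmul : ((Fintype.card ι : ℚ) - 1) * ∑ j, g j = 0 := by linarith
      exact (mul_eq_zero.1 hmul).resolve_left hne
    intro i
    rw [← hrow i, htotal]
  simpa using hli.fintype_card_le_finrank

end Finset

namespace SimpleGraph

variable {V : Type*} {G : SimpleGraph V}

lemma IsClique.card_inter_le_one_s16 [DecidableEq V] {Q S : Finset V} (hQ : G.IsClique (Q : Set V))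
    (hS : G.IsIndepSet (S : Set V)) : #(Q ∩ S) ≤ 1 := by
  rw [card_le_one]
  intro a ha b hb
  rw [mem_inter] at ha hb
  by_contra hab
  exact hS ha.2 hb.2 hab (hQ ha.1 hb.1 hab)

lemma IsIndepSet.card_le_of_isClique_cover {S : Finset V} {C : Finset (Finset V)}
    (hS : G.IsIndepSet (S : Set V)) (hC : ∀ Q ∈ C, G.IsClique (Q : Set V))
    (hcov : ∀ v ∈ S, ∃ Q ∈ C, v ∈ Q) : #S ≤ #C := by
  choose! Q hQC hvQ using hcov
  refine card_le_card_of_injOn Q hQC fun u hu v hv huv => ?_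
  by_contra hne
  exact hS hu hv hne (hC _ (hQC u hu) (hvQ u hu) (huv ▸ hvQ v hv) hne)

noncomputable def cliqueNumOn (G : SimpleGraph V) (T : Finset V) : ℕ := by
  classical exact (T.powerset.filter fun Q : Finset V => G.IsClique (Q : Set V)).sup card

lemma IsClique.card_le_cliqueNumOn {Q T : Finset V} (hQ : G.IsClique (Q : Set V)) (hQT : Q ⊆ T) :
    #Q ≤ G.cliqueNumOn T := by
  classical
  exact le_sup (f := card) (mem_filter.2 ⟨mem_powerset.2 hQT, hQ⟩ :
    Q ∈ T.powerset.filter fun Q : Finset V => G.IsClique (Q : Set V))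

lemma exists_isClique_card_eq_cliqueNumOn (G : SimpleGraph V) (T : Finset V) :
    ∃ Q ⊆ T, G.IsClique (Q : Set V) ∧ #Q = G.cliqueNumOn T := by
  classical
  obtain ⟨Q, hQ, hcard⟩ := exists_mem_eq_sup
    (T.powerset.filter fun Q : Finset V => G.IsClique (Q : Set V)) ⟨∅, by simp⟩ card
  rw [mem_filter, mem_powerset] at hQ
  exact ⟨Q, hQ.1, hQ.2, hcard.symm⟩

lemma cliqueNumOn_mono {T T' : Finset V} (h : T ⊆ T') : G.cliqueNumOn T ≤ G.cliqueNumOn T' := by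
  obtain ⟨Q, hQT, hQ, hcard⟩ := G.exists_isClique_card_eq_cliqueNumOn T
  exact hcard ▸ hQ.card_le_cliqueNumOn (hQT.trans h)

lemma one_le_cliqueNumOn {T : Finset V} {v : V} (hv : v ∈ T) : 1 ≤ G.cliqueNumOn T := by
  have hclique : G.IsClique ((({v} : Finset V)) : Set V) := by simp
  simpa using hclique.card_le_cliqueNumOn (singleton_subset_iff.2 hv)

lemma cliqueNum_induce_le_cliqueNumOn (T : Finset V) :
    (G.induce (T : Set V)).cliqueNum ≤ G.cliqueNumOn T := by
  classical
  obtain ⟨Q, hQ⟩ := (G.induce (T : Set V)).exists_isNClique_cliqueNum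
  have hclique : G.IsClique ((Q.map (Function.Embedding.subtype _) : Finset V) : Set V) := by
    simpa using isClique_induce_iff.1 hQ.isClique
  simpa [hQ.card_eq] using hclique.card_le_cliqueNumOn (map_subtype_subset Q)

lemma cliqueNumOn_compl_univ_eq_indepNum [Fintype V] :
    Gᶜ.cliqueNumOn univ = _root_.indepNum G := by
  refine (IsGreatest.csSup_eq ⟨?_, ?_⟩).symm
  · obtain ⟨S, -, hS, hcard⟩ := Gᶜ.exists_isClique_card_eq_cliqueNumOn univ
    exact ⟨S, G.isClique_compl.1 hS, hcard⟩
  · rintro n ⟨S, hS, rfl⟩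
    exact (G.isClique_compl.2 hS).card_le_cliqueNumOn (subset_univ S)

def IsColoringOn (G : SimpleGraph V) (T : Finset V) (k : ℕ) (f : V → ℕ) : Prop :=
  (∀ v ∈ T, f v < k) ∧ ∀ u ∈ T, ∀ v ∈ T, G.Adj u v → f u ≠ f v

def ColorableOn (G : SimpleGraph V) (T : Finset V) (k : ℕ) : Prop :=
  ∃ f : V → ℕ, G.IsColoringOn T k f

lemma IsColoringOn.isIndepSet_filter [DecidableEq V] {T : Finset V} {k : ℕ} {f : V → ℕ}
    (hf : G.IsColoringOn T k f) (j : ℕ) :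
    G.IsIndepSet (({v ∈ T | f v = j} : Finset V) : Set V) := by
  intro u hu v hv _ hadj
  simp only [coe_filter, Set.mem_ofPred_eq] at hu hv
  exact hf.2 u hu.1 v hv.1 hadj (hu.2.trans hv.2.symm)

lemma ColorableOn.mono {T T' : Finset V} {k k' : ℕ} (h : G.ColorableOn T k) (hT : T' ⊆ T)
    (hk : k ≤ k') : G.ColorableOn T' k' := by
  obtain ⟨f, hlt, hadj⟩ := h
  exact ⟨f, fun v hv => (hlt v (hT hv)).trans_le hk,
    fun u hu v hv => hadj u (hT hu) v (hT hv)⟩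

lemma ColorableOn.of_sdiff [DecidableEq V] {T S : Finset V} {k : ℕ}
    (h : G.ColorableOn (T \ S) k) (hS : G.IsIndepSet (S : Set V)) : G.ColorableOn T (k + 1) := by
  obtain ⟨f, hlt, hadj⟩ := h
  refine ⟨fun v => if v ∈ S then k else f v, fun v hv => ?_, fun u hu v hv huv => ?_⟩
  · dsimp only
    split_ifs with hvS
    · exact k.lt_succ_self
    · exact (hlt v (mem_sdiff.2 ⟨hv, hvS⟩)).trans k.lt_succ_self
  · by_cases huS : u ∈ S <;> by_cases hvS : v ∈ S <;> simp only [huS, hvS, if_true, if_false]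
    · exact absurd huv (hS huS hvS huv.ne)
    · exact (hlt v (mem_sdiff.2 ⟨hv, hvS⟩)).ne'
    · exact (hlt u (mem_sdiff.2 ⟨hu, huS⟩)).ne
    · exact hadj u (mem_sdiff.2 ⟨hu, huS⟩) v (mem_sdiff.2 ⟨hv, hvS⟩) huv

lemma ColorableOn.card_le_mul {T : Finset V} {k : ℕ} (h : G.ColorableOn T k) :
    #T ≤ k * Gᶜ.cliqueNumOn T := by
  classical
  obtain ⟨f, hf⟩ := h
  calc #T = ∑ j ∈ range k, #{v ∈ T | f v = j} :=
        card_eq_sum_card_fiberwise fun v hv => mem_range.2 (hf.1 v hv)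
    _ ≤ ∑ _j ∈ range k, Gᶜ.cliqueNumOn T := sum_le_sum fun j _ =>
        (G.isClique_compl.2 (hf.isIndepSet_filter j)).card_le_cliqueNumOn (filter_subset _ _)
    _ = k * Gᶜ.cliqueNumOn T := by rw [sum_const, card_range, smul_eq_mul]

lemma ColorableOn.exists_isClique_cover [DecidableEq V] {T : Finset V} {k : ℕ}
    (h : Gᶜ.ColorableOn T k) :
    ∃ C : Finset (Finset V), (∀ Q ∈ C, G.IsClique (Q : Set V)) ∧ (∀ v ∈ T, ∃ Q ∈ C, v ∈ Q) ∧
      #C ≤ k := by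
  obtain ⟨f, hf⟩ := h
  refine ⟨(range k).image fun j => {v ∈ T | f v = j}, ?_, fun v hv => ?_, ?_⟩
  · simp only [mem_image]
    rintro _ ⟨j, -, rfl⟩
    exact G.isIndepSet_compl.1 (hf.isIndepSet_filter j)
  · exact ⟨{u ∈ T | f u = f v}, mem_image_of_mem _ (mem_range.2 (hf.1 v hv)), by simp [hv]⟩
  · exact card_image_le.trans (card_range k).le

lemma ColorableOn.of_colorable_induce {T : Finset V} {k : ℕ}
    (h : (G.induce (T : Set V)).Colorable k) : G.ColorableOn T k := by
  classical
  obtain ⟨c⟩ := h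
  refine ⟨fun v => if hv : v ∈ T then c ⟨v, hv⟩ else 0, fun v hv => ?_, fun u hu v hv huv => ?_⟩
  · simp [hv]
  · simpa [hu, hv, Fin.val_inj] using c.valid (v := ⟨u, hu⟩) (w := ⟨v, hv⟩) huv

lemma colorableOn_cliqueNumOn_of_isPerfect (hG : IsPerfect G) (T : Finset V) :
    G.ColorableOn T (G.cliqueNumOn T) :=
  (ColorableOn.of_colorable_induce
    (chromaticNumber_le_iff_colorable.1 (hG T).le)).mono subset_rfl
    (cliqueNum_induce_le_cliqueNumOn T)

section Lovasz

variable [DecidableEq V]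

lemma exists_isClique_card_eq_cliqueNumOn_disjoint {T S : Finset V}
    (hmin : ∀ T' ⊂ T, G.ColorableOn T' (G.cliqueNumOn T'))
    (hT : ¬ G.ColorableOn T (G.cliqueNumOn T)) (hS : G.IsIndepSet (S : Set V)) :
    ∃ Q ⊆ T, G.IsClique (Q : Set V) ∧ #Q = G.cliqueNumOn T ∧ Disjoint Q S := by
  obtain heq | hlt := (cliqueNumOn_mono (G := G) (sdiff_subset (s := T) (t := S))).eq_or_lt
  · obtain ⟨Q, hQ, hclique, hcard⟩ := G.exists_isClique_card_eq_cliqueNumOn (T \ S)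
    exact ⟨Q, hQ.trans sdiff_subset, hclique, hcard.trans heq,
      disjoint_of_subset_left hQ sdiff_disjoint⟩
  · have hssub : T \ S ⊂ T := ssubset_of_subset_of_ne sdiff_subset fun h => hlt.ne (by rw [h])
    exact absurd (((hmin _ hssub).of_sdiff hS).mono subset_rfl hlt) hT

/-- The `α ω + 1` independent sets of Gasparian's argument: a maximum independent set `S₀` of `T`,
and the color classes of colorings `F x` of `T.erase x` (`x ∈ S₀`) with `k` colors. -/
def colorClassFamily (T S₀ : Finset V) (F : V → V → ℕ) (k : ℕ) :
    Option (S₀ × Fin k) → Finset V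
  | none => S₀
  | some (x, j) => {v ∈ T.erase x | F x v = j}

variable {T S₀ : Finset V} {F : V → V → ℕ} {k : ℕ}

lemma colorClassFamily_subset (hS₀ : S₀ ⊆ T) : ∀ i, colorClassFamily T S₀ F k i ⊆ T
  | none => hS₀
  | some _ => (filter_subset _ _).trans (erase_subset _ _)

lemma isIndepSet_colorClassFamily (hS₀ : G.IsIndepSet (S₀ : Set V))
    (hF : ∀ x ∈ S₀, G.IsColoringOn (T.erase x) k (F x)) :
    ∀ i, G.IsIndepSet (colorClassFamily T S₀ F k i : Set V)
  | none => hS₀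
  | some (x, j) => (hF x x.2).isIndepSet_filter j

lemma card_le_card_filter_mem_colorClassFamily (hF : ∀ x ∈ S₀, ∀ v ∈ T.erase x, F x v < k)
    {v : V} (hv : v ∈ T) : #S₀ ≤ #{i | v ∈ colorClassFamily T S₀ F k i} := by
  let index (x : S₀) : Option (S₀ × Fin k) :=
    if h : (x : V) = v then none
    else some (x, ⟨F x v, hF x x.2 v (mem_erase.2 ⟨Ne.symm h, hv⟩)⟩)
  rw [← card_attach]
  refine card_le_card_of_injOn index (fun x _ => ?_) fun x _ y _ hxy => ?_
  · by_cases h : (x : V) = v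
    · simp only [index, dif_pos h, coe_filter, mem_univ, true_and, Set.mem_ofPred_eq]
      exact h ▸ x.2
    · simp only [index, dif_neg h, coe_filter, mem_univ, true_and, Set.mem_ofPred_eq]
      exact mem_filter.2 ⟨mem_erase.2 ⟨Ne.symm h, hv⟩, rfl⟩
  · by_cases hx : (x : V) = v <;> by_cases hy : (y : V) = v
    · exact Subtype.ext (hx.trans hy.symm)
    all_goals simp only [index, hx, hy, dite_true, dite_false, reduceCtorEq, Option.some.injEq,
      Prod.mk.injEq] at hxy
    exact hxy.1

theorem colorableOn_cliqueNumOn_of_card_le_mul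
    (h : ∀ T : Finset V, #T ≤ Gᶜ.cliqueNumOn T * G.cliqueNumOn T) (T : Finset V) :
    G.ColorableOn T (G.cliqueNumOn T) := by
  induction T using Finset.strongInduction with
  | H T hmin =>
  by_contra hT
  obtain ⟨v, hv⟩ : T.Nonempty := nonempty_iff_ne_empty.2 fun hT0 =>
    hT ⟨fun _ => 0, by simp [IsColoringOn, hT0]⟩
  obtain ⟨S₀, hS₀T, hS₀, hS₀card⟩ := Gᶜ.exists_isClique_card_eq_cliqueNumOn T
  rw [isClique_compl] at hS₀
  have hcol : ∀ x ∈ S₀, G.ColorableOn (T.erase x) (G.cliqueNumOn T) := fun x hx =>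
    (hmin _ (erase_ssubset (hS₀T hx))).mono subset_rfl (cliqueNumOn_mono (erase_subset _ _))
  choose! F hF using hcol
  set S := colorClassFamily T S₀ F (G.cliqueNumOn T)
  have hS := isIndepSet_colorClassFamily hS₀ hF
  choose Q hQT hQ hQcard hQS using fun i =>
    exists_isClique_card_eq_cliqueNumOn_disjoint hmin hT (hS i)
  have hcard :
      Fintype.card (Option (S₀ × Fin (G.cliqueNumOn T))) = #S₀ * G.cliqueNumOn T + 1 := by
    simp
  have hpattern : ∀ i j, #(Q i ∩ S j) = if i = j then 0 else 1 := fun i =>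
    card_inter_eq_ite_of_disjoint (fun j => (hQ i).card_inter_le_one_s16 (hS j))
      (fun v hv => card_le_card_filter_mem_colorClassFamily (fun x hx => (hF x hx).1) (hQT i hv))
      (by rw [hcard, hQcard, mul_comm]) (hQS i)
  have hk : 0 < G.cliqueNumOn T := one_le_cliqueNumOn hv
  have hα : 0 < #S₀ := hS₀card ▸ one_le_cliqueNumOn hv
  have hT_large : #S₀ * G.cliqueNumOn T + 1 ≤ #T := hcard ▸
    card_le_card_of_card_inter_eq_ite (colorClassFamily_subset hS₀T)
      (by rw [hcard]; have := Nat.mul_pos hα hk; omega) hpattern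
  have hT_small : #T ≤ #S₀ * G.cliqueNumOn T := hS₀card ▸ h T
  omega

end Lovasz

end SimpleGraph

theorem perfect_graph_clique_cover_eq_indepNum
    {V : Type*} [Fintype V] (G : SimpleGraph V) (hG : IsPerfect G) :
    IsLeast
      {n : ℕ | ∃ C : Finset (Finset V),
        (∀ Q ∈ C, G.IsClique (↑Q : Set V)) ∧ (∀ v : V, ∃ Q ∈ C, v ∈ Q) ∧ n = C.card}
      (indepNum G) := by
  classical
  rw [← SimpleGraph.cliqueNumOn_compl_univ_eq_indepNum]
  have hcompl (T : Finset V) : #T ≤ Gᶜᶜ.cliqueNumOn T * Gᶜ.cliqueNumOn T := by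
    rw [compl_compl]
    exact (G.colorableOn_cliqueNumOn_of_isPerfect hG T).card_le_mul
  have hlower : ∀ C : Finset (Finset V), (∀ Q ∈ C, G.IsClique (Q : Set V)) →
      (∀ v : V, ∃ Q ∈ C, v ∈ Q) → Gᶜ.cliqueNumOn univ ≤ #C := fun C hC hcov => by
    obtain ⟨S, -, hS, hcard⟩ := Gᶜ.exists_isClique_card_eq_cliqueNumOn univ
    exact hcard ▸ (G.isClique_compl.1 hS).card_le_of_isClique_cover hC fun v _ => hcov v
  obtain ⟨C, hC, hcov, hCcard⟩ :=
    (Gᶜ.colorableOn_cliqueNumOn_of_card_le_mul hcompl univ).exists_isClique_cover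
  have hcov' (v : V) : ∃ Q ∈ C, v ∈ Q := hcov v (mem_univ v)
  exact ⟨⟨C, hC, hcov', (hlower C hC hcov').antisymm hCcard⟩,
    fun n ⟨C, hC, hcov, hn⟩ => hn ▸ hlower C hC hcov⟩
end

section
/- (Integrality of the matroid independent set polytope) Let M be a matroid on a finite ground set U with rank function r, and let P ⊆ ℝ^U be the polytope of all x : U → ℝ with x ≥ 0 and Σ_{e ∈ S} x(e) ≤ r(S) for every S ⊆ U. Then the extreme points of P are exactly the 0/1 indicator vectors of independent sets of M. -/
open scoped Classical

/-! Indicator vectors of independent sets lie in the polytope and are vertices of the unit cube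
containing it, hence extreme. Conversely, let `x` be extreme. By submodularity of the rank, the
tight sets `S` (those with `∑_S x = r(S)`) are closed under intersection. If a coordinate `f` is
fractional and no tight set contains a fractional coordinate, then `x ± ε e_f` stay in the
polytope. Otherwise an inclusion-minimal tight set `A` containing a fractional coordinate `f`
contains a second one `g`, because `∑_A x = r(A)` is an integer, and every tight set contains
both `f` and `g` or neither, so `x ± ε (e_f - e_g)` stay in the polytope. Hence `x` is a 0/1
vector, and its support `I` satisfies `|I| ≤ r(I)`, so it is independent. -/

open Filter Topology Finset

lemma notMem_extremePoints_of_eventually_add_smul_mem {E : Type*} [AddCommGroup E] [Module ℝ E]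
    {A : Set E} {x d : E} (hd : d ≠ 0) (h : ∀ᶠ t in 𝓝 (0 : ℝ), x + t • d ∈ A) :
    x ∉ A.extremePoints ℝ := by
  intro hx
  have hneg : ∀ᶠ t in 𝓝 (0 : ℝ), x + (-t) • d ∈ A :=
    (continuous_neg.tendsto' 0 0 neg_zero).eventually h
  obtain ⟨t, ht, hplus, hminus⟩ :=
    (eventually_mem_nhdsWithin.and ((h.and hneg).filter_mono nhdsWithin_le_nhds) :
      ∀ᶠ t in 𝓝[>] (0 : ℝ), t ∈ Set.Ioi 0 ∧ _).exists
  have hseg : x ∈ openSegment ℝ (x + t • d) (x + (-t) • d) :=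
    ⟨1 / 2, 1 / 2, by norm_num, by norm_num, by norm_num, by module⟩
  have htd : t • d = 0 := by simpa using hx.2 hplus hminus hseg
  exact hd ((smul_eq_zero.1 htd).resolve_left ht.ne')

lemma eventually_forall_add_mul_le {ι : Type*} [Finite ι] {a b c : ι → ℝ} (hab : ∀ i, a i ≤ b i)
    (hc : ∀ i, a i = b i → c i = 0) : ∀ᶠ t in 𝓝 (0 : ℝ), ∀ i, a i + t * c i ≤ b i := by
  refine eventually_all.2 fun i ↦ ?_
  rcases (hab i).eq_or_lt with h | h
  · exact Eventually.of_forall fun t ↦ by simp [hc i h, h]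
  · have hcont : Tendsto (fun t : ℝ ↦ a i + t * c i) (𝓝 0) (𝓝 (a i)) :=
      (by fun_prop : Continuous fun t : ℝ ↦ a i + t * c i).tendsto' 0 (a i) (by simp)
    exact (hcont.eventually_lt_const h).mono fun _ ↦ le_of_lt

lemma exists_ne_of_sum_eq_intCast {ι : Type*} {s : Finset ι} {x : ι → ℝ} {n : ℤ}
    (hs : ∑ e ∈ s, x e = n) {f : ι} (hf : f ∈ s) (hf0 : 0 < x f) (hf1 : x f < 1) :
    ∃ g ∈ s, g ≠ f ∧ x g ≠ 0 ∧ x g ≠ 1 := by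
  by_contra! h
  have hrest : ∑ e ∈ s.erase f, x e = #{e ∈ s.erase f | x e = 1} := by
    rw [← Finset.sum_boole]
    refine Finset.sum_congr rfl fun e he ↦ ?_
    obtain ⟨hef, hes⟩ := Finset.mem_erase.1 he
    by_cases h0 : x e = 0
    · simp [h0]
    · simp [h e hes hef h0]
  have hxf : x f = ((n - #{e ∈ s.erase f | x e = 1} : ℤ) : ℝ) := by
    push_cast
    linarith [Finset.add_sum_erase s x hf]
  rw [hxf] at hf0 hf1
  norm_cast at hf0 hf1
  omega

namespace Matroid

variable {α : Type*} {M : Matroid α}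

lemma cast_matroidRank {S : Set α} (hS : M.IsRkFinite S) : (matroidRank M S : ℕ∞) = M.eRk S := by
  have hne : M.eRk S ≠ ⊤ := hS.eRk_lt_top.ne
  have hgreatest :
      IsGreatest {n : ℕ | ∃ I ⊆ S, M.Indep I ∧ I.ncard = n} (M.eRk S).toNat := by
    refine ⟨?_, ?_⟩
    · obtain ⟨I, hIS, hI, hIc⟩ := le_eRk_iff.1 (le_refl (M.eRk S))
      exact ⟨I, hIS, hI, by rw [Set.ncard_def, hIc]⟩
    · rintro n ⟨I, hIS, hI, rfl⟩
      rw [Set.ncard_def]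
      exact ENat.toNat_le_toNat (hI.encard_le_eRk_of_subset hIS) hne
  rw [matroidRank, hgreatest.csSup_eq, ENat.natCast_toNat hne]

lemma matroidRank_singleton_le (e : α) : matroidRank M {e} ≤ 1 := by
  have h := M.eRk_singleton_le e
  rw [← cast_matroidRank M.isRkFinite_singleton] at h
  exact_mod_cast h

lemma matroidRank_inter_add_matroidRank_union_le {X Y : Set α} (hX : M.IsRkFinite X)
    (hY : M.IsRkFinite Y) :
    matroidRank M (X ∩ Y) + matroidRank M (X ∪ Y) ≤ matroidRank M X + matroidRank M Y := by
  have h := M.eRk_inter_add_eRk_union_le X Y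
  rw [← cast_matroidRank hX, ← cast_matroidRank hY, ← cast_matroidRank hX.inter_right,
    ← cast_matroidRank (hX.union hY)] at h
  exact_mod_cast h

lemma Indep.ncard_le_matroidRank_s18 {I S : Set α} (hI : M.Indep I) (hIS : I ⊆ S)
    (hS : M.IsRkFinite S) : I.ncard ≤ matroidRank M S := by
  have h := hI.encard_le_eRk_of_subset hIS
  rw [← cast_matroidRank hS, ← (hS.finite_of_indep_subset hI hIS).cast_ncard_eq] at h
  exact_mod_cast h

lemma indep_of_ncard_le_matroidRank {S : Set α} (hS : S.Finite) (h : S.ncard ≤ matroidRank M S) :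
    M.Indep S := by
  have hrk := M.isRkFinite_of_finite hS
  refine hrk.indep_of_encard_le_eRk ?_
  rw [← cast_matroidRank hrk, ← hS.cast_ncard_eq]
  exact_mod_cast h

def independencePolytope (M : Matroid α) : Set (α → ℝ) :=
  {x | (∀ e, 0 ≤ x e) ∧ ∀ S : Finset α, ∑ e ∈ S, x e ≤ (matroidRank M ↑S : ℝ)}

def IsTight (M : Matroid α) (x : α → ℝ) (S : Finset α) : Prop :=
  ∑ e ∈ S, x e = (matroidRank M ↑S : ℝ)

variable {x : α → ℝ}

lemma le_one_of_mem_independencePolytope (hx : x ∈ M.independencePolytope) (e : α) : x e ≤ 1 := by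
  have h := hx.2 {e}
  rw [Finset.sum_singleton, Finset.coe_singleton] at h
  exact h.trans (by exact_mod_cast matroidRank_singleton_le e)

lemma independencePolytope_subset_cube :
    M.independencePolytope ⊆ Set.univ.pi fun _ ↦ Set.Icc 0 1 :=
  fun _ hx e _ ↦ ⟨hx.1 e, le_one_of_mem_independencePolytope hx e⟩

lemma IsTight.inter (hx : x ∈ M.independencePolytope) {S T : Finset α} (hS : M.IsTight x S)
    (hT : M.IsTight x T) : M.IsTight x (S ∩ T) := by
  have hsubmod : (matroidRank M ↑(S ∩ T) : ℝ) + matroidRank M ↑(S ∪ T)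
      ≤ matroidRank M ↑S + matroidRank M ↑T := by
    have h := matroidRank_inter_add_matroidRank_union_le (M.isRkFinite_of_finite S.finite_toSet)
      (M.isRkFinite_of_finite T.finite_toSet)
    rw [← Finset.coe_inter, ← Finset.coe_union] at h
    exact_mod_cast h
  have hsum := Finset.sum_union_inter (s₁ := S) (s₂ := T) (f := x)
  unfold IsTight at *
  linarith [hx.2 (S ∪ T), hx.2 (S ∩ T)]

lemma eventually_add_smul_mem_independencePolytope [Finite α] (hx : x ∈ M.independencePolytope)
    {d : α → ℝ} (hd0 : ∀ e, x e = 0 → d e = 0) (hdS : ∀ S, M.IsTight x S → ∑ e ∈ S, d e = 0) :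
    ∀ᶠ t in 𝓝 (0 : ℝ), x + t • d ∈ M.independencePolytope := by
  have hcoord := eventually_forall_add_mul_le (a := fun e ↦ -x e) (b := 0) (c := fun e ↦ -d e)
    (fun e ↦ by simpa using hx.1 e) (fun e he ↦ by simpa using hd0 e (neg_eq_zero.1 he))
  have hrank := eventually_forall_add_mul_le (a := fun S : Finset α ↦ ∑ e ∈ S, x e)
    (c := fun S ↦ ∑ e ∈ S, d e) hx.2 hdS
  filter_upwards [hcoord, hrank] with t htcoord htrank
  refine ⟨fun e ↦ ?_, fun S ↦ ?_⟩
  · have h := htcoord e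
    simp only [Pi.zero_apply] at h
    simp only [Pi.add_apply, Pi.smul_apply, smul_eq_mul]
    linarith
  · simpa [Finset.sum_add_distrib, Finset.mul_sum] using htrank S

lemma exists_direction_preserving_tight_sets (hx : x ∈ M.independencePolytope) {f : α}
    (hf : x f ∈ Set.Ioo 0 1) :
    ∃ d : α → ℝ, d ≠ 0 ∧ (∀ e, x e = 0 → d e = 0) ∧ ∀ S, M.IsTight x S → ∑ e ∈ S, d e = 0 := by
  by_cases hC : ∃ A, M.IsTight x A ∧ ∃ a ∈ A, x a ∈ Set.Ioo 0 1
  · obtain ⟨A, hAmin⟩ := exists_minimal_of_wellFoundedLT _ hC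
    obtain ⟨hA, a, haA, ha⟩ := hAmin.prop
    -- `A ∩ S` is again a tight set with a fractional coordinate, so minimality forces `A ⊆ S`.
    have hcover : ∀ S, M.IsTight x S → ∀ e ∈ A, x e ∈ Set.Ioo 0 1 → e ∈ S → A ⊆ S :=
      fun S hS e heA he heS ↦ (hAmin.2 ⟨hA.inter hx hS, e, Finset.mem_inter.2 ⟨heA, heS⟩, he⟩
        Finset.inter_subset_left).trans Finset.inter_subset_right
    obtain ⟨b, hbA, hba, hb0, hb1⟩ := exists_ne_of_sum_eq_intCast hA haA ha.1 ha.2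
    have hb : x b ∈ Set.Ioo 0 1 :=
      ⟨(hx.1 b).lt_of_ne' hb0, (le_one_of_mem_independencePolytope hx b).lt_of_ne hb1⟩
    refine ⟨Pi.single a 1 - Pi.single b 1, fun h ↦ ?_, fun e he ↦ ?_, fun S hS ↦ ?_⟩
    · simpa [hba] using congrFun h a
    · have hea : e ≠ a := by rintro rfl; exact ha.1.ne' he
      have heb : e ≠ b := by rintro rfl; exact hb.1.ne' he
      simp [hea, heb]
    · have hab : a ∈ S ↔ b ∈ S :=
        ⟨fun haS ↦ hcover S hS a haA ha haS hbA, fun hbS ↦ hcover S hS b hbA hb hbS haA⟩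
      simp [Finset.sum_sub_distrib, Finset.sum_pi_single', hab]
  · push Not at hC
    refine ⟨Pi.single f 1, by simp, fun e he ↦ ?_, fun S hS ↦ ?_⟩
    · have hef : e ≠ f := by rintro rfl; exact hf.1.ne' he
      simp [hef]
    · have hfS : f ∉ S := fun hfS ↦ hC S hS f hfS hf
      simp [Finset.sum_pi_single', hfS]

lemma eq_zero_or_eq_one_of_mem_extremePoints [Finite α]
    (hx : x ∈ M.independencePolytope.extremePoints ℝ) (e : α) : x e = 0 ∨ x e = 1 := by
  by_contra! h
  obtain ⟨d, hd, hd0, hdS⟩ := exists_direction_preserving_tight_sets hx.1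
    ⟨(hx.1.1 e).lt_of_ne' h.1, (le_one_of_mem_independencePolytope hx.1 e).lt_of_ne h.2⟩
  exact notMem_extremePoints_of_eventually_add_smul_mem hd
    (eventually_add_smul_mem_independencePolytope hx.1 hd0 hdS) hx

lemma exists_indep_eq_indicator [Fintype α] (hx : x ∈ M.independencePolytope)
    (h01 : ∀ e, x e = 0 ∨ x e = 1) :
    ∃ I : Finset α, M.Indep ↑I ∧ x = fun e ↦ if e ∈ I then 1 else 0 := by
  refine ⟨({e | x e = 1} : Finset α), indep_of_ncard_le_matroidRank (Finset.finite_toSet _) ?_, ?_⟩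
  · have h := hx.2 ({e | x e = 1} : Finset α)
    rw [Finset.sum_congr rfl fun e he ↦ (Finset.mem_filter.1 he).2] at h
    rw [Set.ncard_coe_finset]
    exact_mod_cast (by simpa using h)
  · funext e
    rcases h01 e with h | h <;> simp [h]

lemma indicator_mem_independencePolytope {I : Finset α} (hI : M.Indep ↑I) :
    (fun e ↦ if e ∈ I then (1 : ℝ) else 0) ∈ M.independencePolytope := by
  refine ⟨fun e ↦ by positivity, fun S ↦ ?_⟩
  have h := (hI.subset Finset.inter_subset_right).ncard_le_matroidRank_s18
    (Finset.coe_subset.2 (Finset.inter_subset_left (s₁ := S) (s₂ := I)))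
    (M.isRkFinite_of_finite S.finite_toSet)
  rw [Set.ncard_coe_finset] at h
  rw [Finset.sum_boole, Finset.filter_mem_eq_inter]
  exact_mod_cast h

lemma indicator_mem_extremePoints_cube (I : Finset α) :
    (fun e ↦ if e ∈ I then (1 : ℝ) else 0) ∈
      (Set.univ.pi fun _ : α ↦ Set.Icc (0 : ℝ) 1).extremePoints ℝ := by
  rw [extremePoints_pi]
  intro e _
  rw [Set.extremePoints_Icc zero_le_one]
  by_cases he : e ∈ I <;> simp [he]

end Matroid

theorem matroid_polytope_integral_general
    {α : Type*} [Fintype α] (M : Matroid α) :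
    Set.extremePoints ℝ
      {x : α → ℝ |
        (∀ e, 0 ≤ x e) ∧
        ∀ S : Finset α, ∑ e ∈ S, x e ≤ (matroidRank M ↑S : ℝ)}
    =
    {x : α → ℝ | ∃ I : Finset α, M.Indep (↑I : Set α) ∧
      x = fun e => if e ∈ I then (1 : ℝ) else 0} := by
  change M.independencePolytope.extremePoints ℝ = _
  ext x
  constructor
  · exact fun hx ↦ Matroid.exists_indep_eq_indicator hx.1
      (Matroid.eq_zero_or_eq_one_of_mem_extremePoints hx)
  · rintro ⟨I, hI, rfl⟩
    exact inter_extremePoints_subset_extremePoints_of_subset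
      Matroid.independencePolytope_subset_cube
      ⟨Matroid.indicator_mem_independencePolytope hI, Matroid.indicator_mem_extremePoints_cube I⟩

theorem matroid_polytope_integral
    {α : Type*} [Fintype α] (M : Matroid α) (hE : M.E = Set.univ) :
    Set.extremePoints ℝ
      {x : α → ℝ |
        (∀ e, 0 ≤ x e) ∧
        ∀ S : Finset α, ∑ e ∈ S, x e ≤ (matroidRank M ↑S : ℝ)}
    =
    {x : α → ℝ | ∃ I : Finset α, M.Indep (↑I : Set α) ∧
      x = fun e => if e ∈ I then (1 : ℝ) else 0} :=
  matroid_polytope_integral_general M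
end
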